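/- arXiv:2011.00381 — 9 statements merged into one kernel-verified Lean document; each statement's English description precedes it below -/
import Mathlib

section
/- Let S be a stream contained in a partial permutation w, with S = {(x_i, w(x_i)) : i ∈ ℤ} indexed so that i < j iff x_i < x_j. Define the partial rotation pr_S(w) by pr_S(w)(a) = w(x_{i+1}) if a = x_i, and pr_S(w)(a) = w(a) otherwise. Then pr_S(w) is again a partial permutation with the same domain as w, and the inverse partial rotation pr_S^{-1} satisfies pr_S^{-1}(pr_S(w)) = w. -/
/-- Partial rotation along a stream: if `S = {(f i, w (f i)) : i ∈ ℤ}` is a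
stream contained in the partial permutation `w` (with domain `dom`), then the
partial rotation `pr` (defined by `pr (f i) = w (f (i+1))` and agreeing with
`w` off the stream) is again a partial permutation with the same domain, and
the inverse partial rotation undoes it: `pr_S⁻¹ (pr_S w) = w` on `dom`. -/
theorem stmt7 (n : ℕ) (hn : 0 < n) (dom : Set ℤ) (w : ℤ → ℤ)
    (hdom : ∀ x : ℤ, x ∈ dom ↔ x + n ∈ dom)
    (hinj : Set.InjOn w dom)
    (hper : ∀ x ∈ dom, w (x + n) = w x + n)
    (f : ℤ → ℤ) (hf : StrictMono f) (hrange : Set.range f ⊆ dom)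
    (hclosed : ∀ i : ℤ, ∃ k : ℤ, 0 < k ∧ f (i + k) = f i + n)
    (hclosed' : ∀ i : ℤ, ∃ k : ℤ, 0 < k ∧ f (i - k) = f i - n)
    (hinc : StrictMono (w ∘ f))
    (pr : ℤ → ℤ)
    (hpr₁ : ∀ i : ℤ, pr (f i) = w (f (i + 1)))
    (hpr₂ : ∀ a : ℤ, (∀ i : ℤ, f i ≠ a) → pr a = w a) :
    (Set.InjOn pr dom ∧ ∀ x ∈ dom, pr (x + n) = pr x + n) ∧
    (∀ ipr : ℤ → ℤ,
      (∀ i : ℤ, ipr (f i) = pr (f (i - 1))) →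
      (∀ a : ℤ, (∀ i : ℤ, f i ≠ a) → ipr a = pr a) →
      ∀ x ∈ dom, ipr x = w x) := by
  have hfinj : Function.Injective f := hf.injective
  have hfdom : ∀ i : ℤ, f i ∈ dom := fun i => hrange ⟨i, rfl⟩
  have key : ∀ i j : ℤ, f j = f i + n → f (j + 1) = f (i + 1) + n := by
    intro i j hij
    obtain ⟨k0, hk0, hfk0⟩ := hclosed i
    have hji : j = i + k0 := hfinj (by rw [hij, hfk0])
    obtain ⟨k, hk, hfk⟩ := hclosed (i + 1)
    have hkk : k = k0 := by
      rcases lt_trichotomy k k0 with h | h | h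
      · exfalso
        have h1 : i + 1 + k ≤ i + k0 := by omega
        have h2 : f (i + 1 + k) ≤ f (i + k0) := hf.monotone h1
        rw [hfk, hfk0] at h2
        have h3 : f i < f (i + 1) := hf (by omega)
        omega
      · exact h
      · exfalso
        obtain ⟨m, hm, hfm⟩ := hclosed' (i + k0 + 1)
        have h1 : f (i + k0) < f (i + k0 + 1) := hf (by omega)
        have h2 : f (i + k0 + 1) < f (i + 1 + k) := hf (by omega)
        rw [hfk0] at h1
        rw [hfk] at h2
        have h3 : f i < f (i + k0 + 1 - m) := by omega
        have h4 : f (i + k0 + 1 - m) < f (i + 1) := by omega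
        have h5 : i < i + k0 + 1 - m := hf.lt_iff_lt.mp h3
        have h6 : i + k0 + 1 - m < i + 1 := hf.lt_iff_lt.mp h4
        omega
    rw [hji, show i + k0 + 1 = i + 1 + k by omega, hfk]
  refine ⟨⟨?_, ?_⟩, ?_⟩
  · intro a ha b hb hab
    by_cases haf : ∃ i, f i = a
    · obtain ⟨i, rfl⟩ := haf
      by_cases hbf : ∃ j, f j = b
      · obtain ⟨j, rfl⟩ := hbf
        rw [hpr₁, hpr₁] at hab
        have : i + 1 = j + 1 := hinc.injective hab
        have : i = j := by omega
        rw [this]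
      · push_neg at hbf
        rw [hpr₁, hpr₂ b hbf] at hab
        have := hinj (hfdom (i + 1)) hb hab
        exact absurd this (hbf (i + 1))
    · push_neg at haf
      by_cases hbf : ∃ j, f j = b
      · obtain ⟨j, rfl⟩ := hbf
        rw [hpr₂ a haf, hpr₁] at hab
        have := hinj ha (hfdom (j + 1)) hab
        exact absurd this.symm (haf (j + 1))
      · push_neg at hbf
        rw [hpr₂ a haf, hpr₂ b hbf] at hab
        exact hinj ha hb hab
  · intro x hx
    by_cases hxf : ∃ i, f i = x
    · obtain ⟨i, rfl⟩ := hxf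
      obtain ⟨k0, hk0, hfk0⟩ := hclosed i
      rw [← hfk0, hpr₁, hpr₁, key i (i + k0) hfk0]
      exact hper _ (hfdom (i + 1))
    · push_neg at hxf
      have hxnf : ∀ j : ℤ, f j ≠ x + n := by
        intro j hj
        obtain ⟨m, hm, hfm⟩ := hclosed' j
        have : f (j - m) = x := by omega
        exact hxf (j - m) this
      rw [hpr₂ x hxf, hpr₂ (x + n) hxnf]
      exact hper x hx
  · intro ipr h1 h2 x hx
    by_cases hxf : ∃ i, f i = x
    · obtain ⟨i, rfl⟩ := hxf
      rw [h1 i, hpr₁ (i - 1), show i - 1 + 1 = i by omega]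
    · push_neg at hxf
      rw [h2 x hxf, hpr₂ x hxf]
end

section
/- For w in the extended affine symmetric group, the sign insertion process starting from (0, ∅, ∅, [w(1),…,w(n)]) terminates after finitely many steps with an empty last component, defining sgn_𝔓(w) and sgn_𝔔(w); moreover sgn_𝔓(w) and sgn_𝔔(w) are strictly increasing words of length n. -/
/-!
Along the insertion, `𝔓` and `𝔔` stay increasing with `|𝔔| = |𝔓|`, `|𝔓| + |word| = n`, and the
residues mod `n` of `𝔓 ++ word` stay distinct: initially because `w` permutes the residue classes,
later because a bump trades the letter `b` for `n + b`. Distinct residues give `a ∉ 𝔓`, so a letter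
that is not appended always bumps some `b > a`. The pair `(|word|, ∑ x ∈ word, #{p ∈ 𝔓 | x < p})`
decreases lexicographically: an append shortens the word, while a bump lowers `b` to `a` in `𝔓`,
which increases no count, and trades `a` for `n + b`, which fewer entries of `𝔓` exceed than `a`
(`b` itself exceeds `a`). Once the word is empty, `|𝔓| = |𝔔| = n`.
-/

/-- One step of Blasiak's sign insertion, acting on states
`(counter, 𝔓, 𝔔, remaining word)`. -/
def signStep (n : ℕ) : ℤ × List ℤ × List ℤ × List ℤ → ℤ × List ℤ × List ℤ × List ℤ
  | (c, P, Q, []) => (c, P, Q, [])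
  | (c, P, Q, a :: w) =>
    if ∀ p ∈ P, p < a then (c + 1, P ++ [a], Q ++ [c + 1], w)
    else
      match P.find? (fun p => decide (a < p)) with
      | some b => (c + 1, P.map (fun x => if x = b then a else x), Q, w ++ [(n : ℤ) + b])
      | none => (c, P, Q, [])

theorem Function.exists_iterate_of_invariant {α β : Type*} [Preorder β] [WellFoundedLT β]
    (f : α → α) (I D : α → Prop) (μ : α → β)
    (hf : ∀ a, I a → ¬ D a → I (f a) ∧ μ (f a) < μ a) (a : α) (ha : I a) :
    ∃ k, I (f^[k] a) ∧ D (f^[k] a) := by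
  induction a using (InvImage.wf μ wellFounded_lt).induction with
  | _ a ih =>
    by_cases hd : D a
    · exact ⟨0, ha, hd⟩
    obtain ⟨hfa, hlt⟩ := hf a ha hd
    obtain ⟨k, hk⟩ := ih (f a) hlt hfa
    exact ⟨k + 1, by rwa [Function.iterate_succ_apply]⟩

theorem map_ite_append_cons_of_not_mem {α : Type*} [DecidableEq α] {a b : α} {l₁ l₂ : List α}
    (hb : b ∉ l₁ ++ l₂) :
    (l₁ ++ b :: l₂).map (fun x => if x = b then a else x) = l₁ ++ a :: l₂ := by
  have hid {l : List α} (hl : l ⊆ l₁ ++ l₂) : l.map (fun x => if x = b then a else x) = l :=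
    (List.map_congr_left fun x hx => if_neg (ne_of_mem_of_not_mem (hl hx) hb)).trans l.map_id
  rw [List.map_append, List.map_cons, if_pos rfl, hid (List.subset_append_left _ _),
    hid (List.subset_append_right _ _)]

theorem countP_lt_append_cons_le {α : Type*} [LinearOrder α] {a b : α} {l₁ l₂ : List α}
    (hab : a ≤ b) (x : α) :
    (l₁ ++ a :: l₂).countP (x < ·) ≤ (l₁ ++ b :: l₂).countP (x < ·) := by
  have : (if x < a then 1 else 0) ≤ if x < b then 1 else 0 := by
    by_cases ha : x < a
    · simp [ha, ha.trans_le hab]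
    · simp [ha]
  simp only [List.countP_append, List.countP_cons, decide_eq_true_eq]
  omega

theorem countP_lt_self_lt_countP_lt {α : Type*} [LinearOrder α] {a b : α} {l₁ l₂ : List α}
    (hab : a < b) :
    (l₁ ++ b :: l₂).countP (b < ·) < (l₁ ++ b :: l₂).countP (a < ·) := by
  have mono (l : List α) : l.countP (b < ·) ≤ l.countP (a < ·) :=
    List.countP_mono_left fun x _ => by simpa using hab.trans
  have h₁ := mono l₁
  have h₂ := mono l₂
  simp only [List.countP_append, List.countP_cons, lt_irrefl, hab, decide_true, decide_false,
    Bool.false_eq_true, ↓reduceIte, add_zero]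
  omega

theorem modEq_of_modEq_apply {n : ℤ} {w : ℤ → ℤ} (hinj : w.Injective)
    (hw : ∀ i, w (i + n) = w i + n) {i j : ℤ} (h : w i ≡ w j [ZMOD n]) : i ≡ j [ZMOD n] := by
  have hper : Function.Periodic (fun i => w i - i) n := fun i => by simp only [hw]; ring
  obtain ⟨k, hk⟩ := h.dvd
  have hk' : w (i + k * n) - (i + k * n) = w i - i := hper.int_mul k i
  have : w (i + k * n) = w j := by linarith
  exact Int.modEq_iff_dvd.mpr ⟨k, by linarith [hinj this]⟩

namespace SignInsertion

structure SignInv (n : ℕ) (s : ℤ × List ℤ × List ℤ × List ℤ) : Prop where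
  length_add : s.2.1.length + s.2.2.2.length = n
  nodup_emod : ((s.2.1 ++ s.2.2.2).map (· % (n : ℤ))).Nodup
  pairwise_P : s.2.1.Pairwise (· < ·)
  pairwise_Q : s.2.2.1.Pairwise (· < ·)
  length_Q : s.2.2.1.length = s.2.1.length
  le_of_mem_Q : ∀ q ∈ s.2.2.1, q ≤ s.1

variable {n : ℕ} {c : ℤ} {P Q t : List ℤ} {a b : ℤ}

theorem signStep_cons_of_forall_lt (h : ∀ p ∈ P, p < a) :
    signStep n (c, P, Q, a :: t) = (c + 1, P ++ [a], Q ++ [c + 1], t) := by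
  simp only [signStep, if_pos h]

theorem signStep_cons_of_find?_eq_some (h : ¬ ∀ p ∈ P, p < a)
    (hb : P.find? (fun p => decide (a < p)) = some b) :
    signStep n (c, P, Q, a :: t) =
      (c + 1, P.map (fun x => if x = b then a else x), Q, t ++ [(n : ℤ) + b]) := by
  simp only [signStep, if_neg h, hb]

theorem SignInv.append (hI : SignInv n (c, P, Q, a :: t)) (h : ∀ p ∈ P, p < a) :
    SignInv n (c + 1, P ++ [a], Q ++ [c + 1], t) where
  length_add := by
    have := hI.length_add
    simp only [List.length_append, List.length_cons, List.length_nil] at this ⊢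
    omega
  nodup_emod := by simpa using hI.nodup_emod
  pairwise_P := List.pairwise_append.mpr
    ⟨hI.pairwise_P, List.pairwise_singleton _ _, by simpa using h⟩
  pairwise_Q := List.pairwise_append.mpr ⟨hI.pairwise_Q, List.pairwise_singleton _ _,
    fun q hq _ hr =>
      (List.mem_singleton.mp hr).symm ▸ (hI.le_of_mem_Q q hq).trans_lt (lt_add_one c)⟩
  length_Q := by simpa using hI.length_Q
  le_of_mem_Q q hq := by
    rcases List.mem_append.mp hq with hq | hq
    · exact (hI.le_of_mem_Q q hq).trans (le_add_of_nonneg_right zero_le_one)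
    · exact (List.mem_singleton.mp hq).le

theorem SignInv.bump {l₁ l₂ : List ℤ} (hI : SignInv n (c, l₁ ++ b :: l₂, Q, a :: t))
    (hl₁ : ∀ x ∈ l₁, x < a) (hab : a < b) :
    SignInv n (c + 1, l₁ ++ a :: l₂, Q, t ++ [(n : ℤ) + b]) where
  length_add := by
    have := hI.length_add
    simp only [List.length_append, List.length_cons, List.length_nil] at this ⊢
    omega
  nodup_emod := by
    refine (List.Perm.nodup_iff ?_).mpr hI.nodup_emod
    simp only [List.map_append, List.map_cons, List.map_nil, Int.add_emod_left]
    rw [List.perm_iff_count]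
    intro z
    simp only [List.count_append, List.count_cons, List.count_nil]
    omega
  pairwise_P := by
    have hP := hI.pairwise_P
    simp only [List.pairwise_append, List.pairwise_cons, List.mem_cons] at hP ⊢
    refine ⟨hP.1, ⟨fun x hx => hab.trans (hP.2.1.1 x hx), hP.2.1.2⟩, ?_⟩
    rintro x hx y (rfl | hy)
    · exact hl₁ x hx
    · exact hP.2.2 x hx y (Or.inr hy)
  pairwise_Q := hI.pairwise_Q
  length_Q := by simpa using hI.length_Q
  le_of_mem_Q q hq := (hI.le_of_mem_Q q hq).trans (le_add_of_nonneg_right zero_le_one)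

theorem SignInv.ne_of_mem (hI : SignInv n (c, P, Q, a :: t)) {p : ℤ} (hp : p ∈ P) : p ≠ a := by
  have hdisj := (List.nodup_append.mp (List.map_append ▸ hI.nodup_emod)).2.2
  rintro rfl
  exact hdisj _ (List.mem_map_of_mem hp) _ (List.mem_map_of_mem List.mem_cons_self) rfl

theorem SignInv.exists_find?_eq_some (hI : SignInv n (c, P, Q, a :: t)) (h : ¬ ∀ p ∈ P, p < a) :
    ∃ b l₁ l₂, P.find? (fun p => decide (a < p)) = some b ∧ P = l₁ ++ b :: l₂ ∧
      (∀ x ∈ l₁, x < a) ∧ a < b := by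
  obtain ⟨p, hp, hap⟩ : ∃ p ∈ P, a ≤ p := by simpa using h
  obtain ⟨b, hb⟩ : ∃ b, P.find? (fun p => decide (a < p)) = some b :=
    Option.isSome_iff_exists.mp <| List.find?_isSome.mpr
      ⟨p, hp, decide_eq_true <| hap.lt_of_ne (hI.ne_of_mem hp).symm⟩
  obtain ⟨hab, l₁, l₂, rfl, hl₁⟩ := List.find?_eq_some_iff_append.mp hb
  refine ⟨b, l₁, l₂, hb, rfl, fun x hx => ?_, of_decide_eq_true hab⟩
  have hxa : x ≤ a := by simpa using hl₁ x hx
  exact hxa.lt_of_ne (hI.ne_of_mem (List.mem_append_left _ hx))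

def signMeasure (s : ℤ × List ℤ × List ℤ × List ℤ) : ℕ ×ₗ ℕ :=
  toLex (s.2.2.2.length, (s.2.2.2.map fun x => s.2.1.countP (x < ·)).sum)

theorem signMeasure_append_lt {Q' : List ℤ} :
    signMeasure (c + 1, P ++ [a], Q', t) < signMeasure (c, P, Q, a :: t) :=
  Prod.Lex.toLex_lt_toLex.mpr (Or.inl (by simp))

theorem signMeasure_bump_lt {l₁ l₂ : List ℤ} (hab : a < b) :
    signMeasure (c + 1, l₁ ++ a :: l₂, Q, t ++ [(n : ℤ) + b]) <
      signMeasure (c, l₁ ++ b :: l₂, Q, a :: t) := by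
  refine Prod.Lex.toLex_lt_toLex.mpr (Or.inr ⟨by simp, ?_⟩)
  have hb : b ≤ n + b := le_add_of_nonneg_left n.cast_nonneg
  have hnew : (l₁ ++ a :: l₂).countP (n + b < ·) ≤ (l₁ ++ b :: l₂).countP (b < ·) :=
    (List.countP_mono_left fun x _ => by simpa using hb.trans_lt).trans
      (countP_lt_append_cons_le hab.le b)
  have ht := List.sum_le_sum fun x (_ : x ∈ t) =>
    countP_lt_append_cons_le (l₁ := l₁) (l₂ := l₂) hab.le x
  have ha := countP_lt_self_lt_countP_lt (l₁ := l₁) (l₂ := l₂) hab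
  simp only [List.map_append, List.map_cons, List.map_nil, List.sum_append, List.sum_cons,
    List.sum_nil]
  omega

theorem SignInv.signStep {s : ℤ × List ℤ × List ℤ × List ℤ} (hI : SignInv n s)
    (hs : s.2.2.2 ≠ []) :
    SignInv n (signStep n s) ∧ signMeasure (signStep n s) < signMeasure s := by
  obtain ⟨c, P, Q, _ | ⟨a, t⟩⟩ := s
  · exact absurd rfl hs
  by_cases h : ∀ p ∈ P, p < a
  · rw [signStep_cons_of_forall_lt h]
    exact ⟨hI.append h, signMeasure_append_lt⟩
  · obtain ⟨b, l₁, l₂, hb, rfl, hl₁, hab⟩ := hI.exists_find?_eq_some h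
    have hbP : b ∉ l₁ ++ l₂ :=
      (List.nodup_cons.mp <| List.nodup_middle.mp <| hI.pairwise_P.imp ne_of_lt).1
    rw [signStep_cons_of_find?_eq_some h hb, map_ite_append_cons_of_not_mem hbP]
    exact ⟨hI.bump hl₁ hab, signMeasure_bump_lt hab⟩

theorem exists_iterate_signStep_eq_nil {s : ℤ × List ℤ × List ℤ × List ℤ} (hI : SignInv n s) :
    ∃ k, SignInv n ((signStep n)^[k] s) ∧ ((signStep n)^[k] s).2.2.2 = [] :=
  Function.exists_iterate_of_invariant _ _ _ signMeasure (fun _ hI hs => hI.signStep hs) s hI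

theorem SignInv.length_P_of_nil {s : ℤ × List ℤ × List ℤ × List ℤ} (hI : SignInv n s)
    (hs : s.2.2.2 = []) : s.2.1.length = n := by
  simpa [hs] using hI.length_add

theorem signInv_init {w : ℤ → ℤ} (hinj : w.Injective) (hw : ∀ i : ℤ, w (i + n) = w i + n) :
    SignInv n (0, [], [], (List.range n).map fun j => w ((j : ℤ) + 1)) where
  length_add := by simp
  nodup_emod := by
    -- `List.range n` is coerced to `List ℤ` through a bind; turn it into a `map`
    simp only [List.nil_append, List.pure_def, List.bind_eq_flatMap, ← List.map_eq_flatMap,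
      List.map_map]
    refine List.nodup_range.map_on fun i hi j hj hij => ?_
    have hij : (i : ℤ) ≡ j [ZMOD n] := (modEq_of_modEq_apply hinj hw hij).add_right_cancel' 1
    rw [List.mem_range] at hi hj
    unfold Int.ModEq at hij
    rwa [Int.emod_eq_of_lt (by positivity) (by omega), Int.emod_eq_of_lt (by positivity) (by omega),
      Nat.cast_inj] at hij
  pairwise_P := List.Pairwise.nil
  pairwise_Q := List.Pairwise.nil
  length_Q := rfl
  le_of_mem_Q := by simp

end SignInsertion

open SignInsertion in
theorem stmt10_general (n : ℕ) (w : Equiv.Perm ℤ)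
    (hw : ∀ i : ℤ, w (i + n) = w i + n) :
    ∃ N : ℕ,
      (((signStep n)^[N] ((0 : ℤ), [], [], (List.range n).map (fun j => w ((j : ℤ) + 1)))).2.2.2
        = []) ∧
      List.Pairwise (· < ·)
        ((signStep n)^[N] ((0 : ℤ), [], [], (List.range n).map (fun j => w ((j : ℤ) + 1)))).2.1 ∧
      ((signStep n)^[N] ((0 : ℤ), [], [], (List.range n).map (fun j => w ((j : ℤ) + 1)))).2.1.length
        = n ∧
      List.Pairwise (· < ·)
        ((signStep n)^[N] ((0 : ℤ), [], [], (List.range n).map (fun j => w ((j : ℤ) + 1)))).2.2.1 ∧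
      ((signStep n)^[N]
        ((0 : ℤ), [], [], (List.range n).map (fun j => w ((j : ℤ) + 1)))).2.2.1.length = n := by
  obtain ⟨N, hI, hnil⟩ := exists_iterate_signStep_eq_nil (signInv_init w.injective hw)
  have hlen := hI.length_P_of_nil hnil
  exact ⟨N, hnil, hI.pairwise_P, hlen, hI.pairwise_Q, hI.length_Q.trans hlen⟩

/-- Sign insertion, started from `(0, ∅, ∅, [w 1, …, w n])` for an element `w`
of the extended affine symmetric group, terminates after finitely many steps
with empty remaining word, and the resulting `𝔓 = sgn_𝔓 w` and `𝔔 = sgn_𝔔 w`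
are strictly increasing words of length `n`. -/
theorem stmt10 (n : ℕ) (hn : 0 < n) (w : Equiv.Perm ℤ)
    (hw : ∀ i : ℤ, w (i + n) = w i + n) :
    ∃ N : ℕ,
      (((signStep n)^[N] ((0 : ℤ), [], [], (List.range n).map (fun j => w ((j : ℤ) + 1)))).2.2.2
        = []) ∧
      List.Pairwise (· < ·)
        ((signStep n)^[N] ((0 : ℤ), [], [], (List.range n).map (fun j => w ((j : ℤ) + 1)))).2.1 ∧
      ((signStep n)^[N] ((0 : ℤ), [], [], (List.range n).map (fun j => w ((j : ℤ) + 1)))).2.1.length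
        = n ∧
      List.Pairwise (· < ·)
        ((signStep n)^[N] ((0 : ℤ), [], [], (List.range n).map (fun j => w ((j : ℤ) + 1)))).2.2.1 ∧
      ((signStep n)^[N]
        ((0 : ℤ), [], [], (List.range n).map (fun j => w ((j : ℤ) + 1)))).2.2.1.length = n :=
  stmt10_general n w hw
end

section
/- Let Γ(i−1, 𝔓, 𝔔, w) = (i, 𝔓', 𝔔', w') be one step of sign insertion in which an entry a bumps an entry b from 𝔓 (the non-appending case). Then, viewing the concatenations as window notations of affine permutations, 𝔓' ∗ w' is obtained from 𝔓 ∗ w by applying a sequence of adjacent transposition moves (right star operations / Knuth moves) followed by right multiplication by the shift element ω. -/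
/-!
Write `𝔓 = 𝔓₁ ++ b :: 𝔓₂`. Injectivity of `𝔓 ∗ w` and minimality of `b` give
`𝔓₁ < a < b < 𝔓₂`. Knuth moves first carry `a` leftwards through `𝔓₂` until it sits next to
`b`, each swap being admissible because the entry left of the pair lies between its two values;
then they carry `b` leftwards through `𝔓₁` to the front, each swap now witnessed by the entry
right of the pair. The resulting window `b, 𝔓₁, a, 𝔓₂, w''` turns into `𝔓₁, a, 𝔓₂, w'', b + n`
under `ω`.
-/

/-- The extended affine permutation whose window notation is the list `l`
(of length `n`): position `i` is congruent to `r + 1` modulo `n` with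
`r = (i - 1) % n`, and values are shifted by multiples of `n`. -/
def windowFun (n : ℕ) (l : List ℤ) : ℤ → ℤ :=
  fun i => l.getD ((i - 1) % (n : ℤ)).toNat 0 + ((i - 1) / (n : ℤ)) * (n : ℤ)

/-- A right star operation (Knuth move) on extended affine permutations, viewed
as functions `ℤ → ℤ`: swap the values at window positions `p, p + 1` (and all
their translates), subject to the admissibility condition that `u (p - 1)` or
`u (p + 2)` lies strictly between `u p` and `u (p + 1)`. -/
def RightStar (n : ℕ) (u v : ℤ → ℤ) : Prop :=
  ∃ p : ℤ,
    ((min (u p) (u (p + 1)) < u (p + 2) ∧ u (p + 2) < max (u p) (u (p + 1))) ∨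
     (min (u p) (u (p + 1)) < u (p - 1) ∧ u (p - 1) < max (u p) (u (p + 1)))) ∧
    (∀ k : ℤ, v (p + k * n) = u (p + 1 + k * n) ∧ v (p + 1 + k * n) = u (p + k * n)) ∧
    (∀ x : ℤ, (∀ k : ℤ, x ≠ p + k * n ∧ x ≠ p + 1 + k * n) → v x = u x)

section WindowNotation

variable {n : ℕ}

theorem windowFun_apply (L : List ℤ) {r : ℕ} (hr : r < n) (k : ℤ) :
    windowFun n L (r + 1 + k * n) = L.getD r 0 + k * n := by
  have hn : (n : ℤ) ≠ 0 := by omega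
  have hx : (r : ℤ) + 1 + k * n - 1 = r + k * n := by ring
  rw [windowFun, hx, Int.add_mul_emod_self_right, Int.add_mul_ediv_right _ _ hn,
    Int.emod_eq_of_lt (by omega) (by omega), Int.ediv_eq_zero_of_lt (by omega) (by omega),
    zero_add, Int.toNat_natCast]

theorem windowFun_natCast_add_one (L : List ℤ) {r : ℕ} (hr : r < n) :
    windowFun n L (r + 1) = L.getD r 0 := by
  simpa using windowFun_apply L hr 0

theorem exists_eq_natCast_add_one_add_mul (hn : 0 < n) (x : ℤ) :
    ∃ r : ℕ, ∃ k : ℤ, r < n ∧ x = r + 1 + k * n := by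
  have hn' : (0 : ℤ) < n := by exact_mod_cast hn
  have h₀ := Int.emod_nonneg (x - 1) hn'.ne'
  have h₁ := Int.emod_lt_of_pos (x - 1) hn'
  have h₂ := Int.emod_add_mul_ediv (x - 1) n
  refine ⟨((x - 1) % n).toNat, (x - 1) / n, by omega, ?_⟩
  rw [Int.toNat_of_nonneg h₀]
  linarith [mul_comm (n : ℤ) ((x - 1) / n)]

theorem nodup_of_injective_windowFun {L : List ℤ} (hlen : L.length = n)
    (hinj : Function.Injective (windowFun n L)) : L.Nodup := by
  rw [List.nodup_iff_injective_get]
  intro i j hij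
  have hval : ∀ m : Fin L.length, windowFun n L ((m : ℕ) + 1) = L.get m := fun m => by
    rw [windowFun_natCast_add_one L (hlen ▸ m.isLt)]
    simp
  have := hinj ((hval i).trans (hij.trans (hval j).symm))
  exact Fin.ext (by omega)

-- Right multiplication by `ω` on window notations.
theorem windowFun_append_singleton {L : List ℤ} (hlen : L.length + 1 = n) (c i : ℤ) :
    windowFun n (L ++ [n + c]) i = windowFun n (c :: L) (i + 1) := by
  obtain ⟨r, k, hr, rfl⟩ := exists_eq_natCast_add_one_add_mul (n := n) (by omega) i
  rw [windowFun_apply _ hr]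
  rcases Nat.lt_or_ge (r + 1) n with hr1 | hr1
  · have hi : (r : ℤ) + 1 + k * n + 1 = ((r + 1 : ℕ) : ℤ) + 1 + k * n := by push_cast; ring
    rw [hi, windowFun_apply _ hr1, List.getD_cons_succ, List.getD_eq_getElem?_getD,
      List.getElem?_append_left (by omega), ← List.getD_eq_getElem?_getD]
  · obtain rfl : r = L.length := by omega
    have hi : (L.length : ℤ) + 1 + k * n + 1 = ((0 : ℕ) : ℤ) + 1 + (k + 1) * n := by
      push_cast [← hlen]; ring
    rw [hi, windowFun_apply _ (by omega)]
    simp only [List.getD_append_right, le_refl, Nat.sub_self, List.getD_cons_zero]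
    ring

theorem getD_append_cons_cons_comm {X Y : List ℤ} {c d : ℤ} {r : ℕ} (h₁ : r ≠ X.length)
    (h₂ : r ≠ X.length + 1) : (X ++ d :: c :: Y).getD r 0 = (X ++ c :: d :: Y).getD r 0 := by
  rcases lt_or_ge r X.length with h | h
  · simp [List.getElem?_append_left h]
  · obtain ⟨j, rfl⟩ : ∃ j, r = X.length + (j + 2) := ⟨r - X.length - 2, by omega⟩
    simp [List.getElem?_append_right]

theorem rightStar_windowFun_swap {X Y : List ℤ} {c d : ℤ} (hlen : (X ++ c :: d :: Y).length = n)
    (hadm : (min c d < windowFun n (X ++ c :: d :: Y) (X.length + 3) ∧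
        windowFun n (X ++ c :: d :: Y) (X.length + 3) < max c d) ∨
      (min c d < windowFun n (X ++ c :: d :: Y) X.length ∧
        windowFun n (X ++ c :: d :: Y) X.length < max c d)) :
    RightStar n (windowFun n (X ++ c :: d :: Y)) (windowFun n (X ++ d :: c :: Y)) := by
  have hX : X.length + 1 < n := by simp at hlen; omega
  have hc : ∀ (L : List ℤ) (k : ℤ),
      windowFun n L (X.length + 1 + k * n) = L.getD X.length 0 + k * n :=
    fun L => windowFun_apply L (by omega)
  have hd : ∀ (L : List ℤ) (k : ℤ),
      windowFun n L (X.length + 1 + 1 + k * n) = L.getD (X.length + 1) 0 + k * n := fun L => by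
    simpa using windowFun_apply L hX
  refine ⟨X.length + 1, ?_, fun k => ?_, fun x hx => ?_⟩
  · have hcv : windowFun n (X ++ c :: d :: Y) (X.length + 1) = c := by
      simpa using hc (X ++ c :: d :: Y) 0
    have hdv : windowFun n (X ++ c :: d :: Y) (X.length + 1 + 1) = d := by
      simpa using hd (X ++ c :: d :: Y) 0
    have h₃ : (X.length : ℤ) + 1 + 2 = X.length + 3 := by ring
    have h₀ : (X.length : ℤ) + 1 - 1 = X.length := by ring
    rw [hcv, hdv, h₃, h₀]
    exact hadm
  · simp [hc, hd]
  · obtain ⟨r, k, hr, rfl⟩ := exists_eq_natCast_add_one_add_mul (n := n) (by omega) x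
    have h₁ : r ≠ X.length := by rintro rfl; exact (hx k).1 rfl
    have h₂ : r ≠ X.length + 1 := by rintro rfl; exact (hx k).2 (by push_cast; ring)
    rw [windowFun_apply _ hr, windowFun_apply _ hr, getD_append_cons_cons_comm h₁ h₂]

theorem rightStar_of_between_right {X Y : List ℤ} {c d f : ℤ}
    (hlen : (X ++ c :: d :: f :: Y).length = n) (hf : min c d < f ∧ f < max c d) :
    RightStar n (windowFun n (X ++ c :: d :: f :: Y)) (windowFun n (X ++ d :: c :: f :: Y)) := by
  have hf' : windowFun n (X ++ c :: d :: f :: Y) (X.length + 3) = f := by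
    convert windowFun_natCast_add_one (n := n) (X ++ c :: d :: f :: Y) (r := X.length + 2)
      (by simp at hlen; omega) using 2
    · push_cast; ring
    · simp
  exact rightStar_windowFun_swap hlen (Or.inl (by rwa [hf']))

theorem rightStar_of_between_left {X Y : List ℤ} {e c d : ℤ}
    (hlen : (X ++ e :: c :: d :: Y).length = n) (he : min c d < e ∧ e < max c d) :
    RightStar n (windowFun n (X ++ e :: c :: d :: Y)) (windowFun n (X ++ e :: d :: c :: Y)) := by
  have hassoc : ∀ u v : ℤ, X ++ e :: u :: v :: Y = (X ++ [e]) ++ u :: v :: Y := by simp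
  rw [hassoc c d] at hlen ⊢
  rw [hassoc d c]
  have he' : windowFun n ((X ++ [e]) ++ c :: d :: Y) (X ++ [e]).length = e := by
    convert windowFun_natCast_add_one (n := n) (X ++ [e] ++ c :: d :: Y) (r := X.length)
      (by simp at hlen; omega) using 2 <;> simp
  exact rightStar_windowFun_swap hlen (Or.inr (by rwa [he']))

theorem reflTransGen_rightStar_moveLeft_past_larger {a : ℤ} {S : List ℤ} :
    ∀ {G Y : List ℤ} {e : ℤ}, (e :: S).Pairwise (· < ·) → a < e →
      (G ++ e :: (S ++ a :: Y)).length = n →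
      Relation.ReflTransGen (RightStar n) (windowFun n (G ++ e :: (S ++ a :: Y)))
        (windowFun n (G ++ e :: a :: (S ++ Y))) := by
  induction S with
  | nil => exact fun _ _ _ => .refl
  | cons c S ih =>
    intro G Y e hS hae hlen
    obtain ⟨heS, hS⟩ := List.pairwise_cons.mp hS
    have hec : e < c := heS c List.mem_cons_self
    have hmove := ih (G := G ++ [e]) (Y := Y) hS (hae.trans hec) (by simp at hlen ⊢; omega)
    have hswap := rightStar_of_between_left (n := n) (X := G) (Y := S ++ Y) (c := c) (d := a)
      (by simp at hlen ⊢; omega) ⟨min_lt_of_right_lt hae, lt_max_of_lt_left hec⟩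
    simp only [List.append_assoc, List.cons_append, List.nil_append] at hmove ⊢
    exact hmove.tail hswap

theorem reflTransGen_rightStar_moveLeft_past_smaller {b h : ℤ} {S : List ℤ} :
    ∀ {G Y : List ℤ}, (S ++ [h]).Pairwise (· < ·) → h < b →
      (G ++ (S ++ b :: h :: Y)).length = n →
      Relation.ReflTransGen (RightStar n) (windowFun n (G ++ (S ++ b :: h :: Y)))
        (windowFun n (G ++ b :: (S ++ h :: Y))) := by
  induction S with
  | nil => exact fun _ _ _ => .refl
  | cons x S ih =>
    intro G Y hS hhb hlen
    obtain ⟨hx, hS⟩ := List.pairwise_cons.mp hS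
    have hmove := ih (G := G ++ [x]) (Y := Y) hS hhb (by simp at hlen ⊢; omega)
    obtain ⟨f, Z, hfZ, hxf, hfb⟩ : ∃ f Z, S ++ h :: Y = f :: Z ∧ x < f ∧ f < b := by
      cases S with
      | nil => exact ⟨h, Y, rfl, hx h (by simp), hhb⟩
      | cons y S =>
        refine ⟨y, S ++ h :: Y, rfl, hx y (by simp), ?_⟩
        exact (List.pairwise_append.mp hS).2.2 y (by simp) h (by simp) |>.trans hhb
    have hswap := rightStar_of_between_right (n := n) (X := G) (Y := Z) (c := x) (d := b)
      (by rw [← hfZ]; simp at hlen ⊢; omega) ⟨min_lt_of_left_lt hxf, lt_max_of_lt_right hfb⟩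
    rw [← hfZ] at hswap
    simp only [List.append_assoc, List.cons_append, List.nil_append] at hmove ⊢
    exact hmove.tail hswap

end WindowNotation

theorem Relation.ReflTransGen.exists_seq {α : Type*} {R : α → α → Prop} {u w : α}
    (h : Relation.ReflTransGen R u w) :
    ∃ (m : ℕ) (v : ℕ → α), v 0 = u ∧ (∀ k < m, R (v k) (v (k + 1))) ∧ v m = w := by
  induction h with
  | refl => exact ⟨0, fun _ => u, rfl, by simp, rfl⟩
  | @tail x y _ hxy ih =>
    obtain ⟨m, v, hv0, hstep, hvm⟩ := ih
    refine ⟨m + 1, fun k => if k ≤ m then v k else y, by simp [hv0], fun k hk => ?_, by simp⟩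
    rcases Nat.lt_succ_iff_lt_or_eq.mp hk with hk | rfl
    · simpa [hk.le, Nat.succ_le_of_lt hk] using hstep k hk
    · simpa [hvm] using hxy

theorem stmt11_general (n : ℕ) (P : List ℤ) (a : ℤ) (w'' : List ℤ) (b : ℤ)
    (hP : P.Pairwise (· < ·))
    (hwinlen : (P ++ a :: w'').length = n)
    (hbij : Function.Bijective (windowFun n (P ++ a :: w'')))
    (hb : b ∈ P) (hab : a < b) (hmin : ∀ p ∈ P, a < p → b ≤ p) :
    ∃ (m : ℕ) (v : ℕ → ℤ → ℤ),
      v 0 = windowFun n (P ++ a :: w'') ∧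
      (∀ k : ℕ, k < m → RightStar n (v k) (v (k + 1))) ∧
      windowFun n ((P.map fun x => if x = b then a else x) ++ (w'' ++ [(n : ℤ) + b])) =
        fun i => v m (i + 1) := by
  obtain ⟨P₁, P₂, rfl⟩ := List.append_of_mem hb
  obtain ⟨hP₁, hbP₂sorted, hP₁b⟩ := List.pairwise_append.mp hP
  have hbP₂ := (List.pairwise_cons.mp hbP₂sorted).1
  have hP₁a : ∀ x ∈ P₁, x < a := by
    intro x hx
    have hxa : x ≠ a := by
      have hnodup := nodup_of_injective_windowFun (by simpa using hwinlen) hbij.1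
      simp only [List.append_assoc, List.cons_append, List.nodup_append] at hnodup
      exact hnodup.2.2 x hx a (by simp)
    have hxb := hP₁b x hx b List.mem_cons_self
    exact lt_of_le_of_ne (not_lt.mp fun hax => (hmin x (by simp [hx]) hax).not_gt hxb) hxa
  have hreplace : ((P₁ ++ b :: P₂).map fun x => if x = b then a else x) = P₁ ++ a :: P₂ := by
    have hfix : ∀ Q : List ℤ, (∀ x ∈ Q, x ≠ b) → Q.map (fun x => if x = b then a else x) = Q :=
      fun Q hQ => (List.map_congr_left fun x hx => if_neg (hQ x hx)).trans (List.map_id' Q)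
    simp only [List.map_append, List.map_cons, if_true,
      hfix P₁ fun x hx => (hP₁b x hx b List.mem_cons_self).ne, hfix P₂ fun x hx => (hbP₂ x hx).ne']
  have hlen : P₁.length + P₂.length + 2 + w''.length = n := by simp at hwinlen; omega
  have hmove_a := reflTransGen_rightStar_moveLeft_past_larger (n := n) (G := P₁) (Y := w'')
    hbP₂sorted hab (by simp; omega)
  have hmove_b := reflTransGen_rightStar_moveLeft_past_smaller (n := n) (G := []) (Y := P₂ ++ w'')
    (List.pairwise_append.mpr ⟨hP₁, List.pairwise_singleton _ a, by simpa using hP₁a⟩) hab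
    (by simp; omega)
  obtain ⟨m, v, hv0, hstep, hvm⟩ := (hmove_a.trans (by simpa using hmove_b)).exists_seq
  refine ⟨m, v, by simpa using hv0, hstep, funext fun i => ?_⟩
  rw [hreplace, hvm, ← windowFun_append_singleton (by simp; omega)]
  simp

/-- In the bumping case of a sign insertion step, `𝔓' ∗ w'` is obtained from
`𝔓 ∗ w` (as affine permutations via their window notations) by a sequence of
right star operations followed by right multiplication by the shift `ω`,
i.e. precomposition with `i ↦ i + 1`. -/
theorem stmt11 (n : ℕ) (hn : 0 < n) (P : List ℤ) (a : ℤ) (w'' : List ℤ) (b : ℤ)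
    (hP : P.Pairwise (· < ·))
    (hwinlen : (P ++ a :: w'').length = n)
    (hbij : Function.Bijective (windowFun n (P ++ a :: w'')))
    (hper : ∀ i : ℤ, windowFun n (P ++ a :: w'') (i + n) = windowFun n (P ++ a :: w'') i + n)
    (hb : b ∈ P) (hab : a < b) (hmin : ∀ p ∈ P, a < p → b ≤ p) :
    ∃ (m : ℕ) (v : ℕ → ℤ → ℤ),
      v 0 = windowFun n (P ++ a :: w'') ∧
      (∀ k : ℕ, k < m → RightStar n (v k) (v (k + 1))) ∧
      windowFun n ((P.map fun x => if x = b then a else x) ++ (w'' ++ [(n : ℤ) + b])) =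
        fun i => v m (i + 1) :=
  stmt11_general n P a w'' b hP hwinlen hbij hb hab hmin
end

section
/- For w in the extended affine symmetric group, sgn_𝔔(ω·w) = sgn_𝔔(w), where ω is the shift element with ω(i) = i+1. -/
/-- Shift every letter of the `𝔓` and remaining-word components by one. -/
def shState : ℤ × List ℤ × List ℤ × List ℤ → ℤ × List ℤ × List ℤ × List ℤ
  | (c, P, Q, w) => (c, P.map (· + 1), Q, w.map (· + 1))

theorem signStep_shState (n : ℕ) (s : ℤ × List ℤ × List ℤ × List ℤ) :
    signStep n (shState s) = shState (signStep n s) := by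
  obtain ⟨c, P, Q, w⟩ := s
  cases w with
  | nil => rfl
  | cons a t =>
    have hcond : (∀ p ∈ P.map (· + 1), p < a + 1) ↔ (∀ p ∈ P, p < a) := by
      simp only [List.mem_map]
      constructor
      · intro h p hp
        have := h (p + 1) ⟨p, hp, rfl⟩
        omega
      · rintro h x ⟨p, hp, rfl⟩
        have := h p hp
        omega
    have hfind : (P.map (· + 1)).find? (fun p => decide (a + 1 < p))
        = Option.map (· + 1) (P.find? (fun p => decide (a < p))) := by
      rw [List.find?_map,
        show ((fun p => decide (a + 1 < p)) ∘ fun x => x + 1) = (fun p => decide (a < p)) from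
          funext fun p => by simp only [Function.comp, decide_eq_decide]; omega]
    show signStep n (c, P.map (· + 1), Q, (a + 1) :: t.map (· + 1)) = _
    simp only [signStep, hfind]
    by_cases h : ∀ p ∈ P, p < a
    · rw [if_pos (hcond.mpr h), if_pos h]
      simp [shState]
    · rw [if_neg (fun h' => h (hcond.mp h')), if_neg h]
      cases hb : P.find? (fun p => decide (a < p)) with
      | none => rfl
      | some b =>
        simp only [Option.map_some, shState, Prod.mk.injEq]
        refine ⟨trivial, ?_, trivial, ?_⟩
        · rw [List.map_map, List.map_map]
          apply List.map_congr_left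
          intro p _
          simp only [Function.comp]
          by_cases hpb : p = b
          · simp [hpb]
          · rw [if_neg (by omega), if_neg hpb]
        · rw [List.map_append]
          simp only [List.map_cons, List.map_nil]
          congr 2
          ring

theorem signStep_iterate_shState (n : ℕ) (k : ℕ) (s : ℤ × List ℤ × List ℤ × List ℤ) :
    (signStep n)^[k] (shState s) = shState ((signStep n)^[k] s) := by
  induction k generalizing s with
  | zero => rfl
  | succ k ih => rw [Function.iterate_succ_apply, Function.iterate_succ_apply,
      signStep_shState, ih]

theorem signStep_fix (n : ℕ) (s : ℤ × List ℤ × List ℤ × List ℤ)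
    (h : s.2.2.2 = []) : signStep n s = s := by
  obtain ⟨c, P, Q, w⟩ := s
  simp only at h
  subst h
  rfl

theorem signStep_stable (n : ℕ) (s : ℤ × List ℤ × List ℤ × List ℤ) (N k : ℕ)
    (h : ((signStep n)^[N] s).2.2.2 = []) :
    (signStep n)^[N + k] s = (signStep n)^[N] s := by
  induction k with
  | zero => rfl
  | succ k ih =>
    rw [show N + (k + 1) = (N + k) + 1 from rfl, Function.iterate_succ_apply', ih,
      signStep_fix n _ h]

/-- `sgn_𝔔 (ω · w) = sgn_𝔔 w`: whenever the sign insertion of `w` (with window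
`[w 1, …, w n]`) terminates after `N` steps and that of `ω · w` (with window
`[w 1 + 1, …, w n + 1]`) terminates after `M` steps, the recording words `𝔔`
agree. -/
theorem stmt12 (n : ℕ) (hn : 0 < n) (w : Equiv.Perm ℤ)
    (hw : ∀ i : ℤ, w (i + n) = w i + n) :
    ∀ N M : ℕ,
      ((signStep n)^[N] ((0 : ℤ), [], [], (List.range n).map (fun j => w ((j : ℤ) + 1)))).2.2.2
        = [] →
      ((signStep n)^[M] ((0 : ℤ), [], [], (List.range n).map (fun j => w ((j : ℤ) + 1) + 1))).2.2.2
        = [] →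
      ((signStep n)^[N] ((0 : ℤ), [], [], (List.range n).map (fun j => w ((j : ℤ) + 1)))).2.2.1 =
      ((signStep n)^[M]
        ((0 : ℤ), [], [], (List.range n).map (fun j => w ((j : ℤ) + 1) + 1))).2.2.1 := by
  intro N M hN hM
  set s : ℤ × List ℤ × List ℤ × List ℤ :=
    ((0 : ℤ), [], [], (List.range n).map (fun j => w ((j : ℤ) + 1))) with hs
  have hsh : ((0 : ℤ), ([] : List ℤ), ([] : List ℤ),
      (List.range n).map (fun j => w ((j : ℤ) + 1) + 1)) = shState s := by
    simp [shState, hs, List.map_map, Function.comp]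
  rw [hsh] at hM ⊢
  have h1 : (signStep n)^[N] s = (signStep n)^[max N M] s := by
    rw [show max N M = N + (max N M - N) by omega, signStep_stable n s N _ hN]
  have h2 : (signStep n)^[M] (shState s) = (signStep n)^[max N M] (shState s) := by
    rw [show max N M = M + (max N M - M) by omega, signStep_stable n _ M _ hM]
  rw [h1, h2, signStep_iterate_shState]
  obtain ⟨c, P, Q, w'⟩ := (signStep n)^[max N M] s
  rfl
end

section
/- Let w be an element of the extended affine symmetric group with banner shape T ∈ RSYT(λ): explicitly, define w_{T,N} by placing, on the positions in row T_i of T, the consecutive values Nn(l−i)+L_i+1, …, Nn(l−i)+L_{i−1} in increasing order, where l = l(λ) and L_i = λ_{i+1}+⋯+λ_l. Then for N ≥ 1 the Greene–Kleitman partition of the Shi poset of w_{T,N} equals λ; in particular w_{T,N} lies in the two-sided cell indexed by λ. -/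
/-!
Under `w_{T,N}` the Shi poset is the ordinal sum of the rows of `T`: an entry of a lower row
(larger row index) lies below every entry of a higher row, because the `N n (l - i)` term makes
`w` jump by more than `n` between rows, while two entries of one row are incomparable, since `w`
increases along a row by less than `n`. Hence every antichain lies in a single row, and a union
of `k` antichains is largest when it consists of the `k` longest rows, of total size
`λ_1 + ⋯ + λ_k`.
-/

def ShiLt (n : ℕ) (w : ℤ → ℤ) (i j : ℤ) : Prop :=
  (i > j ∧ w i < w j) ∨ w j > w i + (n : ℤ)

open Finset

theorem sum_le_sum_Icc_card_of_antitoneOn {M : Type*} [AddCommMonoid M] [PartialOrder M]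
    [IsOrderedAddMonoid M] {f : ℕ → M} (hf : AntitoneOn f {i | 1 ≤ i}) (S : Finset ℕ)
    (hS : ∀ s ∈ S, 1 ≤ s) : ∑ s ∈ S, f s ≤ ∑ i ∈ Icc 1 #S, f i := by
  induction S using Finset.induction_on_max with
  | empty => simp
  | insert a S hlt ih =>
    have ha : a ∉ S := fun h => (hlt a h).false
    have hcard : #S + 1 ≤ a := by
      have hsub : S ⊆ Ico 1 a := fun s hs => mem_Ico.2 ⟨hS s (mem_insert_of_mem hs), hlt s hs⟩
      have hSa := card_le_card hsub
      rw [Nat.card_Ico] at hSa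
      have ha1 := hS a (mem_insert_self a S)
      omega
    rw [sum_insert ha, card_insert_of_notMem ha, sum_Icc_succ_top (by omega), add_comm]
    exact add_le_add (ih fun s hs => hS s (mem_insert_of_mem hs))
      (hf (by simp) (by simp only [Set.mem_ofPred_eq]; omega) hcard)

section Layered

variable {α : Type*}

theorem card_image_le_one_of_antichain {X : Finset α} {row : α → ℕ} {lt : α → α → Prop}
    (hcomp : ∀ x ∈ X, ∀ y ∈ X, row y < row x → lt x y) {A : Finset α} (hAX : A ⊆ X)
    (hA : ∀ x ∈ A, ∀ y ∈ A, ¬ lt x y) : #(A.image row) ≤ 1 := by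
  rw [card_le_one]
  simp only [mem_image]
  rintro _ ⟨x, hx, rfl⟩ _ ⟨y, hy, rfl⟩
  by_contra hne
  rcases Nat.lt_or_gt_of_ne hne with h | h
  · exact hA y hy x hx (hcomp y (hAX hy) x (hAX hx) h)
  · exact hA x hx y hy (hcomp x (hAX hx) y (hAX hy) h)

variable [DecidableEq α]

def antichainUnionCards (X : Finset α) (lt : α → α → Prop) (k : ℕ) : Set ℕ :=
  {m | ∃ A : ℕ → Finset α,
    (∀ i : ℕ, i < k → A i ⊆ X ∧ ∀ x ∈ A i, ∀ y ∈ A i, ¬ lt x y) ∧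
    ((range k).biUnion A).card = m}

variable {X : Finset α} {row : α → ℕ} {lt : α → α → Prop}

theorem card_le_of_mem_antichainUnionCards {lam : ℕ → ℕ} (hlam : AntitoneOn lam {i | 1 ≤ i})
    (hrow : ∀ x ∈ X, 1 ≤ row x) (hcard : ∀ i, 1 ≤ i → #{x ∈ X | row x = i} = lam i)
    (hcomp : ∀ x ∈ X, ∀ y ∈ X, row y < row x → lt x y) {k m : ℕ}
    (hm : m ∈ antichainUnionCards X lt k) : m ≤ ∑ i ∈ Icc 1 k, lam i := by
  obtain ⟨A, hA, rfl⟩ := hm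
  set U := (range k).biUnion A
  have hUX : U ⊆ X := biUnion_subset.2 fun i hi => (hA i (mem_range.1 hi)).1
  have hrowU : ∀ s ∈ U.image row, 1 ≤ s := by
    simp only [mem_image]
    rintro _ ⟨x, hx, rfl⟩
    exact hrow x (hUX hx)
  have hrows : #(U.image row) ≤ k := by
    rw [biUnion_image]
    simpa using card_biUnion_le_card_mul _ _ 1 fun i hi =>
      card_image_le_one_of_antichain hcomp (hA i (mem_range.1 hi)).1 (hA i (mem_range.1 hi)).2
  calc #U = ∑ s ∈ U.image row, #{x ∈ U | row x = s} := card_eq_sum_card_image row U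
    _ ≤ ∑ s ∈ U.image row, lam s := sum_le_sum fun s hs =>
        (hcard s (hrowU s hs)) ▸ card_le_card (filter_subset_filter _ hUX)
    _ ≤ ∑ i ∈ Icc 1 #(U.image row), lam i := sum_le_sum_Icc_card_of_antitoneOn hlam _ hrowU
    _ ≤ ∑ i ∈ Icc 1 k, lam i := sum_le_sum_of_subset (Icc_subset_Icc_right hrows)

theorem sum_mem_antichainUnionCards {lam : ℕ → ℕ}
    (hcard : ∀ i, 1 ≤ i → #{x ∈ X | row x = i} = lam i)
    (hincomp : ∀ x ∈ X, ∀ y ∈ X, row x = row y → ¬ lt x y) (k : ℕ) :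
    ∑ i ∈ Icc 1 k, lam i ∈ antichainUnionCards X lt k := by
  refine ⟨fun i => {x ∈ X | row x = i + 1}, fun i _ => ⟨filter_subset _ _, ?_⟩, ?_⟩
  · intro x hx y hy
    simp only [mem_filter] at hx hy
    exact hincomp x hx.1 y hy.1 (hx.2.trans hy.2.symm)
  · rw [card_biUnion fun a _ b _ hab => disjoint_filter.2 fun x _ hxa hxb => hab (by omega),
      sum_congr rfl fun i _ => hcard (i + 1) (by omega), range_eq_Ico, sum_Ico_add', zero_add,
      Ico_add_one_right_eq_Icc]

theorem isGreatest_antichainUnionCards {lam : ℕ → ℕ} (hlam : AntitoneOn lam {i | 1 ≤ i})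
    (hrow : ∀ x ∈ X, 1 ≤ row x) (hcard : ∀ i, 1 ≤ i → #{x ∈ X | row x = i} = lam i)
    (hcomp : ∀ x ∈ X, ∀ y ∈ X, row y < row x → lt x y)
    (hincomp : ∀ x ∈ X, ∀ y ∈ X, row x = row y → ¬ lt x y) (k : ℕ) :
    IsGreatest (antichainUnionCards X lt k) (∑ i ∈ Icc 1 k, lam i) :=
  ⟨sum_mem_antichainUnionCards hcard hincomp k,
    fun _ hm => card_le_of_mem_antichainUnionCards hlam hrow hcard hcomp hm⟩

end Layered

section Banner

variable {n l N : ℕ} {lam : ℕ → ℕ}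

theorem antitoneOn_Ici_one_of_succ_le (hdec : ∀ i : ℕ, 1 ≤ i → i < l → lam (i + 1) ≤ lam i)
    (hzero : ∀ i : ℕ, l < i → lam i = 0) : AntitoneOn lam {i | 1 ≤ i} :=
  antitoneOn_nat_Ici_of_succ_le fun i hi => by
    by_cases h : i < l
    · exact hdec i hi h
    · simp [hzero (i + 1) (by omega)]

theorem sum_Icc_succ_add_le_sum_Icc_succ {a b : ℕ} (hab : a < b) (hbl : b ≤ l) :
    ∑ m ∈ Icc (b + 1) l, lam m + lam b ≤ ∑ m ∈ Icc (a + 1) l, lam m := by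
  have hb : b ∉ Icc (b + 1) l := by simp
  rw [add_comm, ← sum_insert hb]
  exact sum_le_sum_of_subset fun m hm => by simp only [mem_insert, mem_Icc] at hm ⊢; omega

theorem banner_add_lt (hN : 1 ≤ N) {a b : ℕ} (hab : a < b) (hbl : b ≤ l) {c d : ℕ}
    (hc : c ≤ lam b) (hd : 1 ≤ d) :
    N * n * (l - b) + ∑ m ∈ Icc (b + 1) l, lam m + c + n <
      N * n * (l - a) + ∑ m ∈ Icc (a + 1) l, lam m + d := by
  have hL := sum_Icc_succ_add_le_sum_Icc_succ (lam := lam) hab hbl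
  have hNn : N * n * (l - b) + n ≤ N * n * (l - a) :=
    calc N * n * (l - b) + n ≤ N * n * (l - b) + N * n * 1 := by
          rw [mul_one]; exact Nat.add_le_add_left (Nat.le_mul_of_pos_left n hN) _
      _ = N * n * (l - b + 1) := by ring
      _ ≤ N * n * (l - a) := Nat.mul_le_mul_left _ (by omega)
  omega

variable {r j : ℤ → ℕ} {w : ℤ → ℤ}

theorem shiLt_of_row_lt (hN : 1 ≤ N)
    (hrj : ∀ x : ℤ, 1 ≤ x → x ≤ n → 1 ≤ r x ∧ r x ≤ l ∧ 1 ≤ j x ∧ j x ≤ lam (r x))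
    (hw : ∀ x : ℤ, 1 ≤ x → x ≤ n →
      w x = ((N * n * (l - r x) : ℕ) : ℤ) + ((∑ m ∈ Icc (r x + 1) l, lam m : ℕ) : ℤ) + (j x : ℤ))
    {x y : ℤ} (hx : x ∈ Icc (1 : ℤ) n) (hy : y ∈ Icc (1 : ℤ) n) (hxy : r y < r x) :
    ShiLt n w x y := by
  rw [mem_Icc] at hx hy
  obtain ⟨-, hxl, -, hjx⟩ := hrj x hx.1 hx.2
  obtain ⟨-, -, hjy, -⟩ := hrj y hy.1 hy.2
  right
  rw [hw x hx.1 hx.2, hw y hy.1 hy.2]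
  exact_mod_cast banner_add_lt hN hxy hxl hjx hjy

theorem not_shiLt_of_row_eq (hsum : ∑ i ∈ Icc 1 l, lam i = n)
    (hrj : ∀ x : ℤ, 1 ≤ x → x ≤ n → 1 ≤ r x ∧ r x ≤ l ∧ 1 ≤ j x ∧ j x ≤ lam (r x))
    (hrow : ∀ x y : ℤ, 1 ≤ x → x ≤ n → 1 ≤ y → y ≤ n → r x = r y → x < y → j x < j y)
    (hw : ∀ x : ℤ, 1 ≤ x → x ≤ n →
      w x = ((N * n * (l - r x) : ℕ) : ℤ) + ((∑ m ∈ Icc (r x + 1) l, lam m : ℕ) : ℤ) + (j x : ℤ))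
    {x y : ℤ} (hx : x ∈ Icc (1 : ℤ) n) (hy : y ∈ Icc (1 : ℤ) n) (hxy : r x = r y) :
    ¬ ShiLt n w x y := by
  rw [mem_Icc] at hx hy
  rw [ShiLt, hw x hx.1 hx.2, hw y hy.1 hy.2, hxy]
  rintro (⟨hyx, hlt⟩ | hfar)
  · have : (j y : ℤ) < j x := by exact_mod_cast hrow y x hy.1 hy.2 hx.1 hx.2 hxy.symm hyx
    linarith
  · obtain ⟨hy1, hyl, -, hjy⟩ := hrj y hy.1 hy.2
    have hlam : lam (r y) ≤ n :=
      hsum ▸ single_le_sum (fun _ _ => Nat.zero_le _) (mem_Icc.2 ⟨hy1, hyl⟩)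
    have : (j y : ℤ) ≤ n := by exact_mod_cast hjy.trans hlam
    linarith

theorem card_filter_row_eq (hzero : ∀ i : ℕ, l < i → lam i = 0)
    (hrj : ∀ x : ℤ, 1 ≤ x → x ≤ n → 1 ≤ r x ∧ r x ≤ l ∧ 1 ≤ j x ∧ j x ≤ lam (r x))
    (hinj : ∀ x y : ℤ, 1 ≤ x → x ≤ n → 1 ≤ y → y ≤ n → r x = r y → j x = j y → x = y)
    (hsurj : ∀ i jj : ℕ, 1 ≤ i → i ≤ l → 1 ≤ jj → jj ≤ lam i →
      ∃ x : ℤ, 1 ≤ x ∧ x ≤ n ∧ r x = i ∧ j x = jj)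
    {i : ℕ} (hi : 1 ≤ i) : #{x ∈ Icc (1 : ℤ) n | r x = i} = lam i := by
  have hcard : #(Icc 1 (lam i)) = lam i := by simp
  rw [← hcard]
  refine card_bij (fun x _ => j x) ?_ ?_ ?_
  · intro x hx
    simp only [mem_filter, mem_Icc] at hx ⊢
    obtain ⟨⟨hx1, hxn⟩, rfl⟩ := hx
    exact ⟨(hrj x hx1 hxn).2.2.1, (hrj x hx1 hxn).2.2.2⟩
  · intro x hx y hy hjxy
    simp only [mem_filter, mem_Icc] at hx hy
    exact hinj x y hx.1.1 hx.1.2 hy.1.1 hy.1.2 (hx.2.trans hy.2.symm) hjxy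
  · intro b hb
    rw [mem_Icc] at hb
    have hil : i ≤ l := by
      by_contra h
      have := hzero i (by omega)
      omega
    obtain ⟨x, hx1, hxn, hxi, rfl⟩ := hsurj i b hi hil hb.1 hb.2
    exact ⟨x, by simp [hx1, hxn, hxi], rfl⟩

end Banner

theorem stmt13_general (n l N : ℕ) (hN : 1 ≤ N)
    (lam : ℕ → ℕ)
    (hdec : ∀ i : ℕ, 1 ≤ i → i < l → lam (i + 1) ≤ lam i)
    (hzero : ∀ i : ℕ, l < i → lam i = 0)
    (hsum : ∑ i ∈ Finset.Icc 1 l, lam i = n)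
    (r : ℤ → ℕ) (j : ℤ → ℕ)
    (hrj : ∀ x : ℤ, 1 ≤ x → x ≤ n →
      1 ≤ r x ∧ r x ≤ l ∧ 1 ≤ j x ∧ j x ≤ lam (r x))
    (hinj : ∀ x y : ℤ, 1 ≤ x → x ≤ n → 1 ≤ y → y ≤ n →
      r x = r y → j x = j y → x = y)
    (hsurj : ∀ i jj : ℕ, 1 ≤ i → i ≤ l → 1 ≤ jj → jj ≤ lam i →
      ∃ x : ℤ, 1 ≤ x ∧ x ≤ n ∧ r x = i ∧ j x = jj)
    (hrow : ∀ x y : ℤ, 1 ≤ x → x ≤ n → 1 ≤ y → y ≤ n →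
      r x = r y → x < y → j x < j y)
    (w : ℤ → ℤ)
    (hw : ∀ x : ℤ, 1 ≤ x → x ≤ n →
      w x = ((N * n * (l - r x) : ℕ) : ℤ) +
        ((∑ m ∈ Finset.Icc (r x + 1) l, lam m : ℕ) : ℤ) + (j x : ℤ)) :
    ∀ k : ℕ,
      IsGreatest
        {m : ℕ | ∃ A : ℕ → Finset ℤ,
          (∀ i : ℕ, i < k → A i ⊆ Finset.Icc (1 : ℤ) (n : ℤ) ∧
            ∀ x ∈ A i, ∀ y ∈ A i, ¬ ShiLt n w x y) ∧
          ((Finset.range k).biUnion A).card = m}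
        (∑ i ∈ Finset.Icc 1 k, lam i) := fun k =>
  isGreatest_antichainUnionCards (X := Finset.Icc (1 : ℤ) n) (row := r)
    (antitoneOn_Ici_one_of_succ_le hdec hzero)
    (fun x hx => (hrj x (Finset.mem_Icc.1 hx).1 (Finset.mem_Icc.1 hx).2).1)
    (fun _ hi => card_filter_row_eq hzero hrj hinj hsurj hi)
    (fun _ hx _ hy => shiLt_of_row_lt hN hrj hw hx hy)
    (fun _ hx _ hy => not_shiLt_of_row_eq hsum hrj hrow hw hx hy) k

/-- For the element `w = w_{T,N}` (`N ≥ 1`) with banner shape `T ∈ RSYT(λ)`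
(rows encoded by `r` = row index and `j` = position in row, with
`w x = N n (l − r x) + L_{r x} + j x` on `[1,n]` where `L_i = λ_{i+1} + ⋯ + λ_l`),
the Greene–Kleitman partition of its Shi poset equals `λ`: for every `k`, the
maximal cardinality of a union of `k` antichains is `λ_1 + ⋯ + λ_k`.
In particular `w_{T,N}` lies in the two-sided cell indexed by `λ`. -/
theorem stmt13 (n l N : ℕ) (hn : 0 < n) (hl : 0 < l) (hN : 1 ≤ N)
    (lam : ℕ → ℕ)
    (hpos : ∀ i : ℕ, 1 ≤ i → i ≤ l → 0 < lam i)
    (hdec : ∀ i : ℕ, 1 ≤ i → i < l → lam (i + 1) ≤ lam i)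
    (hzero : ∀ i : ℕ, l < i → lam i = 0)
    (hsum : ∑ i ∈ Finset.Icc 1 l, lam i = n)
    (r : ℤ → ℕ) (j : ℤ → ℕ)
    (hrj : ∀ x : ℤ, 1 ≤ x → x ≤ n →
      1 ≤ r x ∧ r x ≤ l ∧ 1 ≤ j x ∧ j x ≤ lam (r x))
    (hinj : ∀ x y : ℤ, 1 ≤ x → x ≤ n → 1 ≤ y → y ≤ n →
      r x = r y → j x = j y → x = y)
    (hsurj : ∀ i jj : ℕ, 1 ≤ i → i ≤ l → 1 ≤ jj → jj ≤ lam i →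
      ∃ x : ℤ, 1 ≤ x ∧ x ≤ n ∧ r x = i ∧ j x = jj)
    (hrow : ∀ x y : ℤ, 1 ≤ x → x ≤ n → 1 ≤ y → y ≤ n →
      r x = r y → x < y → j x < j y)
    (w : ℤ → ℤ)
    (hw : ∀ x : ℤ, 1 ≤ x → x ≤ n →
      w x = ((N * n * (l - r x) : ℕ) : ℤ) +
        ((∑ m ∈ Finset.Icc (r x + 1) l, lam m : ℕ) : ℤ) + (j x : ℤ)) :
    ∀ k : ℕ,
      IsGreatest
        {m : ℕ | ∃ A : ℕ → Finset ℤ,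
          (∀ i : ℕ, i < k → A i ⊆ Finset.Icc (1 : ℤ) (n : ℤ) ∧
            ∀ x ∈ A i, ∀ y ∈ A i, ¬ ShiLt n w x y) ∧
          ((Finset.range k).biUnion A).card = m}
        (∑ i ∈ Finset.Icc 1 k, lam i) :=
  stmt13_general n l N hN lam hdec hzero hsum r j hrj hinj hsurj hrow w hw
end

section
/- For the Shi poset of the element w_{T,N} (N ≥ 1) associated to a row-standard tabloid T, one has i <_P j in the Shi poset if and only if j lies in a strictly higher row of T than i (i.e., the row index of j is strictly smaller than that of i). -/
/-!
Writing `L i = α (i+1) + ⋯ + α l`, the value `w x = N n (l - r x) + L (r x) + j x` is strictly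
increasing along each row, and passing to a strictly higher row raises it by more than `n`: the
first summand grows by at least `N n ≥ n`, while `L` grows by at least `α (r x) ≥ j x`. Within a
row the values differ by less than `α (r x) ≤ n`. So `w y > w x + n` holds exactly when `y` is in a
higher row, and the inversion condition `x > y ∧ w x < w y` never holds otherwise.
-/

open Finset

theorem add_sum_Icc_succ_le_sum_Icc_succ {M : Type*} [AddCommMonoid M] [PartialOrder M]
    [CanonicallyOrderedAdd M] (α : ℕ → M) {l i i' : ℕ} (hii' : i < i')
    (hi' : i' ≤ l) :
    α i' + ∑ m ∈ Icc (i' + 1) l, α m ≤ ∑ m ∈ Icc (i + 1) l, α m :=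
  calc α i' + ∑ m ∈ Icc (i' + 1) l, α m = ∑ m ∈ Icc i' l, α m := by
        rw [Icc_eq_cons_Ioc hi', sum_cons, Icc_add_one_left_eq_Ioc]
    _ ≤ ∑ m ∈ Icc (i + 1) l, α m := sum_le_sum_of_subset (Icc_subset_Icc hii' le_rfl)

/-- The value `w_{T,N}` at the `k`-th entry of row `i`. -/
def tabloidValue (N n l : ℕ) (α : ℕ → ℕ) (i k : ℕ) : ℕ :=
  N * n * (l - i) + ∑ m ∈ Icc (i + 1) l, α m + k

theorem tabloidValue_add_lt_of_row_lt {N n l : ℕ} (hN : 1 ≤ N) (α : ℕ → ℕ) {i i' k k' : ℕ}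
    (hii' : i < i') (hi' : i' ≤ l) (hk : 1 ≤ k) (hk' : k' ≤ α i') :
    tabloidValue N n l α i' k' + n < tabloidValue N n l α i k := by
  have hL := add_sum_Icc_succ_le_sum_Icc_succ α hii' hi'
  have hgap : N * n * (l - i') + n ≤ N * n * (l - i) :=
    calc N * n * (l - i') + n ≤ N * n * (l - i') + N * n := by
          gcongr; exact Nat.le_mul_of_pos_left n hN
      _ = N * n * (l - i' + 1) := by ring
      _ ≤ N * n * (l - i) := by gcongr; omega
  unfold tabloidValue
  omega

theorem stmt14_general (n l N : ℕ) (hN : 1 ≤ N)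
    (α : ℕ → ℕ)
    (hsum : ∑ i ∈ Finset.Icc 1 l, α i = n)
    (r : ℤ → ℕ) (j : ℤ → ℕ)
    (hrj : ∀ x : ℤ, 1 ≤ x → x ≤ n →
      1 ≤ r x ∧ r x ≤ l ∧ 1 ≤ j x ∧ j x ≤ α (r x))
    (hrow : ∀ x y : ℤ, 1 ≤ x → x ≤ n → 1 ≤ y → y ≤ n →
      r x = r y → x < y → j x < j y)
    (w : ℤ → ℤ)
    (hw : ∀ x : ℤ, 1 ≤ x → x ≤ n →
      w x = ((N * n * (l - r x) : ℕ) : ℤ) +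
        ((∑ m ∈ Finset.Icc (r x + 1) l, α m : ℕ) : ℤ) + (j x : ℤ)) :
    ∀ x y : ℤ, 1 ≤ x → x ≤ n → 1 ≤ y → y ≤ n →
      (((x > y ∧ w x < w y) ∨ w y > w x + (n : ℤ)) ↔ r y < r x) := by
  intro x y hx1 hx2 hy1 hy2
  have hw' : ∀ z : ℤ, 1 ≤ z → z ≤ n → w z = tabloidValue N n l α (r z) (j z) := fun z h1 h2 => by
    rw [hw z h1 h2, tabloidValue]; push_cast; rfl
  obtain ⟨hrx1, hrxl, hjx1, hjxα⟩ := hrj x hx1 hx2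
  obtain ⟨hry1, hryl, hjy1, hjyα⟩ := hrj y hy1 hy2
  rw [hw' x hx1 hx2, hw' y hy1 hy2]
  rcases lt_trichotomy (r y) (r x) with hlt | heq | hgt
  · have := tabloidValue_add_lt_of_row_lt (n := n) hN α hlt hrxl hjy1 hjxα
    simp only [hlt, iff_true]
    right; exact_mod_cast this
  · have hαn : α (r x) ≤ n := 
      hsum ▸ single_le_sum (fun _ _ => Nat.zero_le _) (mem_Icc.mpr ⟨hrx1, hrxl⟩)
    have hjyx : y < x → j y < j x := hrow y x hy1 hy2 hx1 hx2 heq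
    rw [heq] at hjyα ⊢
    simp only [tabloidValue, lt_irrefl, iff_false]
    omega
  · have := tabloidValue_add_lt_of_row_lt (n := n) hN α hgt hryl hjx1 hjyα
    simp only [hgt.not_gt, iff_false]
    omega

/-- For `w = w_{T,N}` (`N ≥ 1`) associated to a row-standard tabloid `T` of
shape `α` (rows encoded by `r` = row index, `j` = position in row, with
`w x = N n (l − r x) + L_{r x} + j x` on `[1,n]`), the Shi order satisfies:
`i <_P j` iff `j` lies in a strictly higher row of `T` than `i`. -/
theorem stmt14 (n l N : ℕ) (hn : 0 < n) (hl : 0 < l) (hN : 1 ≤ N)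
    (α : ℕ → ℕ)
    (hpos : ∀ i : ℕ, 1 ≤ i → i ≤ l → 0 < α i)
    (hsum : ∑ i ∈ Finset.Icc 1 l, α i = n)
    (r : ℤ → ℕ) (j : ℤ → ℕ)
    (hrj : ∀ x : ℤ, 1 ≤ x → x ≤ n →
      1 ≤ r x ∧ r x ≤ l ∧ 1 ≤ j x ∧ j x ≤ α (r x))
    (hinj : ∀ x y : ℤ, 1 ≤ x → x ≤ n → 1 ≤ y → y ≤ n →
      r x = r y → j x = j y → x = y)
    (hsurj : ∀ i jj : ℕ, 1 ≤ i → i ≤ l → 1 ≤ jj → jj ≤ α i →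
      ∃ x : ℤ, 1 ≤ x ∧ x ≤ n ∧ r x = i ∧ j x = jj)
    (hrow : ∀ x y : ℤ, 1 ≤ x → x ≤ n → 1 ≤ y → y ≤ n →
      r x = r y → x < y → j x < j y)
    (w : ℤ → ℤ)
    (hw : ∀ x : ℤ, 1 ≤ x → x ≤ n →
      w x = ((N * n * (l - r x) : ℕ) : ℤ) +
        ((∑ m ∈ Finset.Icc (r x + 1) l, α m : ℕ) : ℤ) + (j x : ℤ)) :
    ∀ x y : ℤ, 1 ≤ x → x ≤ n → 1 ≤ y → y ≤ n →
      (((x > y ∧ w x < w y) ∨ w y > w x + (n : ℤ)) ↔ r y < r x) :=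
  stmt14_general n l N hN α hsum r j hrj hrow w hw
end

section
/- The distance between channels satisfies the triangle inequality: if C₁, C₂, C₃ are channels of a partial permutation w, then h(C₁,C₃) ≤ h(C₁,C₂) + h(C₂,C₃); moreover if C₁ ≤_SW C₂ ≤_SW C₃ then equality holds. -/
/-- A stream (for period `n`): a set of balls closed under translation by
`(n, n)`, forming the graph of a strictly increasing partial function. -/
def IsStream (n : ℕ) (S : Set (ℤ × ℤ)) : Prop :=
  (∀ b : ℤ × ℤ, b ∈ S ↔ (b.1 + n, b.2 + n) ∈ S) ∧
  (∀ b b' : ℤ × ℤ, b ∈ S → b' ∈ S → b.1 < b'.1 → b.2 < b'.2) ∧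
  (∀ b b' : ℤ × ℤ, b ∈ S → b' ∈ S → b.1 = b'.1 → b = b')

/-- The density of a stream: the number of `x`-coordinates in `[1, n]`. -/
noncomputable def streamDensity (n : ℕ) (S : Set (ℤ × ℤ)) : ℕ :=
  Set.ncard {x : ℤ | 1 ≤ x ∧ x ≤ n ∧ ∃ y : ℤ, (x, y) ∈ S}

/-- The graph of a partial permutation (period `n`). -/
def IsPartialPerm (n : ℕ) (W : Set (ℤ × ℤ)) : Prop :=
  (∀ b : ℤ × ℤ, b ∈ W ↔ (b.1 + n, b.2 + n) ∈ W) ∧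
  (∀ b b' : ℤ × ℤ, b ∈ W → b' ∈ W → b.1 = b'.1 → b = b') ∧
  (∀ b b' : ℤ × ℤ, b ∈ W → b' ∈ W → b.2 = b'.2 → b = b')

/-- A channel of `W`: a stream contained in `W` of maximal density. -/
def IsChannel (n : ℕ) (W C : Set (ℤ × ℤ)) : Prop :=
  IsStream n C ∧ C ⊆ W ∧
  ∀ S : Set (ℤ × ℤ), IsStream n S → S ⊆ W → streamDensity n S ≤ streamDensity n C

/-- A path in `W` of length `k`: balls strictly increasing in both coordinates. -/
def IsPath (W : Set (ℤ × ℤ)) (k : ℕ) (p : ℕ → ℤ × ℤ) : Prop :=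
  (∀ i : ℕ, i ≤ k → p i ∈ W) ∧
  (∀ i : ℕ, i < k → (p i).1 < (p (i + 1)).1 ∧ (p i).2 < (p (i + 1)).2)

/-- A channel numbering `d = d^C` of `W` relative to the channel `C`: `d`
restricts to a proper numbering of `C`, and for every ball `b ∈ W`, `d b` is
the maximum of `d b' + k` over paths `(b' = b₀, …, b_k = b)` with `b' ∈ C`. -/
def IsChannelNumbering (n : ℕ) (W C : Set (ℤ × ℤ)) (d : ℤ × ℤ → ℤ) : Prop :=
  (∀ b b' : ℤ × ℤ, b ∈ C → b' ∈ C → b.1 < b'.1 → d b < d b') ∧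
  (∀ b : ℤ × ℤ, b ∈ C → d (b.1 + n, b.2 + n) = d b + (streamDensity n C : ℤ)) ∧
  (∀ b ∈ W,
    IsGreatest
      {m : ℤ | ∃ (k : ℕ) (p : ℕ → ℤ × ℤ),
        IsPath W k p ∧ p 0 ∈ C ∧ p k = b ∧ m = d (p 0) + (k : ℤ)}
      (d b))

/-- `C ≤_SW C'`: every ball of `C` is weakly southwest of some ball of `C'`. -/
def SWle (C C' : Set (ℤ × ℤ)) : Prop :=
  ∀ b ∈ C, ∃ b' ∈ C', b'.1 ≤ b.1 ∧ b.2 ≤ b'.2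

/-!
Every channel numbering `d` (of any channel) is a proper numbering of every channel `C`: it
increases along `C` and gains the common density over a period. Counting the balls of `C` in a
period then shows that `d` increases by exactly one between consecutive balls of `C`, so two
channel numberings differ by a constant on each channel; and since a maximal path of `d^C` starts
on `C`, the difference `d - d^C` attains its minimum over `W` on `C`.

For `a ∈ C₁` and `b ∈ C₃` this gives `h₁₃ = u + h₂₃ - v` with `u = (d^{C₂} - d^{C₁})(b) ≤ h₁₂` and
`v = (d^{C₃} - d^{C₂})(a) ≥ 0`. When `C₁ ≤_SW C₂ ≤_SW C₃`, the reverse bounds `h₁₂ ≤ u` and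
`v ≤ 0` come from following a maximal path of `d^{C₁}`, resp. `d^{C₃}`, on one side of `C₂`: a
step that crosses to that side without meeting `C₂` passes two consecutive balls of `C₂`, and
since `d` increases by one between them the path can be rerouted through `C₂` at no cost.
-/

def Reaches (W : Set (ℤ × ℤ)) (k : ℕ) (a b : ℤ × ℤ) : Prop :=
  ∃ p : ℕ → ℤ × ℤ, IsPath W k p ∧ p 0 = a ∧ p k = b

section Reaches
variable {W : Set (ℤ × ℤ)} {k : ℕ} {a b c : ℤ × ℤ}

lemma Reaches.eq_of_zero (h : Reaches W 0 a b) : a = b := by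
  obtain ⟨p, -, rfl, rfl⟩ := h
  rfl

lemma Reaches.mem_right (h : Reaches W k a b) : b ∈ W := by
  obtain ⟨p, hp, -, rfl⟩ := h
  exact hp.1 k le_rfl

lemma reaches_succ_iff :
    Reaches W (k + 1) a c ↔ ∃ b, Reaches W k a b ∧ b.1 < c.1 ∧ b.2 < c.2 ∧ c ∈ W := by
  constructor
  · rintro ⟨p, hp, rfl, rfl⟩
    obtain ⟨h1, h2⟩ := hp.2 k k.lt_succ_self
    exact ⟨p k, ⟨p, ⟨fun i hi => hp.1 i (by omega), fun i hi => hp.2 i (by omega)⟩, rfl, rfl⟩,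
      h1, h2, hp.1 (k + 1) le_rfl⟩
  · rintro ⟨b, ⟨p, hp, rfl, rfl⟩, h1, h2, hc⟩
    refine ⟨fun i => if i ≤ k then p i else c, ⟨fun i hi => ?_, fun i hi => ?_⟩, by simp, by simp⟩
    · by_cases hik : i ≤ k
      · simpa [hik] using hp.1 i hik
      · simpa [hik] using hc
    · rcases Nat.lt_succ_iff_lt_or_eq.mp hi with hik | rfl
      · simpa [hik.le, Nat.succ_le_of_lt hik] using hp.2 i hik
      · simpa using And.intro h1 h2

lemma reaches_add_iff {v : ℤ × ℤ} (hW : ∀ b, b + v ∈ W ↔ b ∈ W) :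
    Reaches W k (a + v) (b + v) ↔ Reaches W k a b := by
  have hpath : ∀ p : ℕ → ℤ × ℤ, IsPath W k (fun i => p i + v) ↔ IsPath W k p := by
    intro p
    simp [IsPath, hW]
  constructor
  · rintro ⟨p, hp, h0, hk⟩
    refine ⟨fun i => p i - v, (hpath _).mp ?_, by simp [h0], by simp [hk]⟩
    simpa using hp
  · rintro ⟨p, hp, rfl, rfl⟩
    exact ⟨fun i => p i + v, (hpath p).mpr hp, rfl, rfl⟩

end Reaches

section ChannelNumbering
variable {n : ℕ} {W C C' : Set (ℤ × ℤ)} {d d' : ℤ × ℤ → ℤ} {k : ℕ} {a b c : ℤ × ℤ}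

lemma IsChannelNumbering.isGreatest (hd : IsChannelNumbering n W C d) (hb : b ∈ W) :
    IsGreatest {m | ∃ a ∈ C, ∃ k : ℕ, Reaches W k a b ∧ m = d a + k} (d b) := by
  convert hd.2.2 b hb using 1
  ext m
  constructor
  · rintro ⟨a, ha, k, ⟨p, hp, rfl, rfl⟩, rfl⟩
    exact ⟨k, p, hp, ha, rfl, rfl⟩
  · rintro ⟨k, p, hp, ha, rfl, rfl⟩
    exact ⟨p 0, ha, k, ⟨p, hp, rfl, rfl⟩, rfl⟩

lemma IsChannelNumbering.exists_reaches (hd : IsChannelNumbering n W C d) (hb : b ∈ W) :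
    ∃ a ∈ C, ∃ k : ℕ, Reaches W k a b ∧ d b = d a + k :=
  (hd.isGreatest hb).1

lemma IsChannelNumbering.add_one_le (hd : IsChannelNumbering n W C d) (hb : b ∈ W) (hc : c ∈ W)
    (h1 : b.1 < c.1) (h2 : b.2 < c.2) : d b + 1 ≤ d c := by
  obtain ⟨a, ha, k, hab, hdb⟩ := hd.exists_reaches hb
  have := (hd.isGreatest hc).2 ⟨a, ha, k + 1, reaches_succ_iff.mpr ⟨b, hab, h1, h2, hc⟩, rfl⟩
  push_cast at this
  omega

lemma IsChannelNumbering.add_le (hd : IsChannelNumbering n W C d) (h : Reaches W k a b) :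
    d a + k ≤ d b := by
  induction k generalizing b with
  | zero => simp [h.eq_of_zero]
  | succ k ih =>
    obtain ⟨c, hac, h1, h2, hb⟩ := reaches_succ_iff.mp h
    have := hd.add_one_le hac.mem_right hb h1 h2
    have := ih hac
    push_cast
    omega

lemma IsChannelNumbering.map_add_period (hW : IsPartialPerm n W) (hC : IsStream n C)
    (hd : IsChannelNumbering n W C d) (hb : b ∈ W) :
    d (b.1 + n, b.2 + n) = d b + streamDensity n C := by
  set v : ℤ × ℤ := ((n : ℤ), (n : ℤ))
  have hWv : ∀ b, b + v ∈ W ↔ b ∈ W := fun b => (hW.1 b).symm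
  have hCv : ∀ b, b + v ∈ C ↔ b ∈ C := fun b => (hC.1 b).symm
  have hdv : ∀ a ∈ C, d (a + v) = d a + streamDensity n C := hd.2.1
  refine (hd.isGreatest ((hWv b).mpr hb)).unique ⟨?_, ?_⟩
  · obtain ⟨a, ha, k, hab, hdb⟩ := hd.exists_reaches hb
    refine ⟨a + v, (hCv a).mpr ha, k, (reaches_add_iff hWv).mpr hab, ?_⟩
    rw [hdv a ha, hdb]
    ring
  · rintro m ⟨a, ha, k, hab, rfl⟩
    obtain ⟨a, rfl⟩ : ∃ a', a = a' + v := ⟨a - v, (sub_add_cancel a v).symm⟩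
    have := hd.add_le ((reaches_add_iff hWv).mp hab)
    rw [hdv a ((hCv a).mp ha)]
    omega

lemma IsChannelNumbering.exists_mem_sub_le (hd : IsChannelNumbering n W C d)
    (hd' : IsChannelNumbering n W C' d') (hb : b ∈ W) : ∃ c ∈ C, d' c - d c ≤ d' b - d b := by
  obtain ⟨a, ha, k, hab, hdb⟩ := hd.exists_reaches hb
  exact ⟨a, ha, by linarith [hd'.add_le hab]⟩

end ChannelNumbering

lemma ncard_inter_Ioc_eq_of_periodic {X : Set ℤ} {p : ℤ} (hp : 0 < p)
    (hX : Function.Periodic (· ∈ X) p) (a b : ℤ) :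
    (X ∩ Set.Ioc a (a + p)).ncard = (X ∩ Set.Ioc b (b + p)).ncard := by
  have hmem : ∀ c x, toIocMod hp c x ∈ X ↔ x ∈ X := fun c x =>
    Eq.to_iff (hX.sub_zsmul_eq (toIocDiv hp c x))
  refine Set.ncard_congr (fun x _ => toIocMod hp b x) ?_ ?_ ?_
  · rintro x ⟨hx, -⟩
    exact ⟨(hmem b x).mpr hx, toIocMod_mem_Ioc hp b x⟩
  · rintro x y ⟨-, hx⟩ ⟨-, hy⟩ h
    rw [← (toIocMod_eq_self hp).mpr hx, ← (toIocMod_eq_self hp).mpr hy,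
      ← toIocMod_toIocMod hp a b x, h, toIocMod_toIocMod]
  · rintro y ⟨hy, hyI⟩
    exact ⟨toIocMod hp a y, ⟨(hmem a y).mpr hy, toIocMod_mem_Ioc hp a y⟩,
      by rw [toIocMod_toIocMod, (toIocMod_eq_self hp).mpr hyI]⟩

lemma exists_consecutive_around {P : ℤ → Prop} {t : ℤ} (hlt : ∃ a, P a ∧ a < t)
    (hge : ∃ a, P a ∧ t ≤ a) : ∃ a b, P a ∧ P b ∧ a < t ∧ t ≤ b ∧ ∀ c, P c → c ≤ a ∨ b ≤ c := by
  obtain ⟨a, ⟨ha, hat⟩, hmax⟩ :=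
    Int.exists_greatest_of_bdd (P := fun c => P c ∧ c < t) ⟨t, fun c h => h.2.le⟩ hlt
  obtain ⟨b, ⟨hb, htb⟩, hmin⟩ :=
    Int.exists_least_of_bdd (P := fun c => P c ∧ t ≤ c) ⟨t, fun c h => h.2⟩ hge
  refine ⟨a, b, ha, hb, hat, htb, fun c hc => ?_⟩
  rcases lt_or_ge c t with h | h
  · exact Or.inl (hmax c ⟨hc, h⟩)
  · exact Or.inr (hmin c ⟨hc, h⟩)

section Stream
variable {n : ℕ} {S : Set (ℤ × ℤ)} {b b' : ℤ × ℤ}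

lemma IsStream.fst_lt_iff_snd_lt (hS : IsStream n S) (hb : b ∈ S) (hb' : b' ∈ S) :
    b.1 < b'.1 ↔ b.2 < b'.2 := by
  refine ⟨hS.2.1 b b' hb hb', fun h => ?_⟩
  rcases lt_trichotomy b.1 b'.1 with h' | h' | h'
  · exact h'
  · rw [hS.2.2 b b' hb hb' h'] at h
    exact absurd h (lt_irrefl _)
  · exact absurd (hS.2.1 b' b hb' hb h') h.not_gt

lemma IsStream.fst_le_iff_snd_le (hS : IsStream n S) (hb : b ∈ S) (hb' : b' ∈ S) :
    b.1 ≤ b'.1 ↔ b.2 ≤ b'.2 := by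
  simpa only [not_lt] using (hS.fst_lt_iff_snd_lt hb' hb).not

lemma IsStream.injOn_fst (hS : IsStream n S) : Set.InjOn Prod.fst S :=
  fun b hb b' hb' h => hS.2.2 b b' hb hb' h

lemma IsStream.add_mul_mem (hS : IsStream n S) (hb : b ∈ S) (k : ℤ) :
    (b.1 + k * n, b.2 + k * n) ∈ S := by
  have hper : Function.Periodic (· ∈ S) ((n : ℤ), (n : ℤ)) := fun b => propext (hS.1 b).symm
  have : b + k • ((n : ℤ), (n : ℤ)) = (b.1 + k * n, b.2 + k * n) := by ext <;> simp
  exact this ▸ (hper.zsmul k b).mpr hb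

lemma IsStream.exists_lt (hn : 0 < n) (hS : IsStream n S) (hne : S.Nonempty) (t : ℤ) :
    ∃ b ∈ S, b.1 < t ∧ b.2 < t := by
  obtain ⟨b, hb⟩ := hne
  set K := |t - b.1| + |t - b.2| + 1 with hKdef
  have hK : K ≤ K * n := le_mul_of_one_le_right (by positivity) (by exact_mod_cast hn)
  refine ⟨_, hS.add_mul_mem hb (-K), ?_, ?_⟩ <;> dsimp only <;> rw [neg_mul] <;>
    linarith [neg_le_abs (t - b.1), neg_le_abs (t - b.2), abs_nonneg (t - b.1),
      abs_nonneg (t - b.2)]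

lemma IsStream.exists_ge (hn : 0 < n) (hS : IsStream n S) (hne : S.Nonempty) (t : ℤ) :
    ∃ b ∈ S, t ≤ b.1 ∧ t ≤ b.2 := by
  obtain ⟨b, hb⟩ := hne
  set K := |t - b.1| + |t - b.2| with hKdef
  have hK : K ≤ K * n := le_mul_of_one_le_right (by positivity) (by exact_mod_cast hn)
  refine ⟨_, hS.add_mul_mem hb K, ?_, ?_⟩ <;> dsimp only <;>
    linarith [le_abs_self (t - b.1), le_abs_self (t - b.2), abs_nonneg (t - b.1),
      abs_nonneg (t - b.2)]

lemma IsStream.exists_consecutive_fst (hn : 0 < n) (hS : IsStream n S) (hne : S.Nonempty)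
    (t : ℤ) : ∃ g ∈ S, ∃ f ∈ S, g.1 < t ∧ t ≤ f.1 ∧ ∀ b ∈ S, b.1 ≤ g.1 ∨ f.1 ≤ b.1 := by
  obtain ⟨bl, hbl, hlt, -⟩ := hS.exists_lt hn hne t
  obtain ⟨bu, hbu, hge, -⟩ := hS.exists_ge hn hne t
  obtain ⟨_, _, ⟨g, hg, rfl⟩, ⟨f, hf, rfl⟩, hgt, htf, hcons⟩ :=
    exists_consecutive_around (P := fun x => ∃ b ∈ S, b.1 = x)
      ⟨bl.1, ⟨bl, hbl, rfl⟩, hlt⟩ ⟨bu.1, ⟨bu, hbu, rfl⟩, hge⟩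
  exact ⟨g, hg, f, hf, hgt, htf, fun b hb => hcons b.1 ⟨b, hb, rfl⟩⟩

lemma IsStream.exists_consecutive_snd (hn : 0 < n) (hS : IsStream n S) (hne : S.Nonempty)
    (t : ℤ) : ∃ g ∈ S, ∃ f ∈ S, g.2 < t ∧ t ≤ f.2 ∧ ∀ b ∈ S, b.1 ≤ g.1 ∨ f.1 ≤ b.1 := by
  obtain ⟨bl, hbl, -, hlt⟩ := hS.exists_lt hn hne t
  obtain ⟨bu, hbu, -, hge⟩ := hS.exists_ge hn hne t
  obtain ⟨_, _, ⟨g, hg, rfl⟩, ⟨f, hf, rfl⟩, hgt, htf, hcons⟩ :=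
    exists_consecutive_around (P := fun y => ∃ b ∈ S, b.2 = y)
      ⟨bl.2, ⟨bl, hbl, rfl⟩, hlt⟩ ⟨bu.2, ⟨bu, hbu, rfl⟩, hge⟩
  refine ⟨g, hg, f, hf, hgt, htf, fun b hb => ?_⟩
  rw [hS.fst_le_iff_snd_le hb hg, hS.fst_le_iff_snd_le hf hb]
  exact hcons b.2 ⟨b, hb, rfl⟩

lemma IsStream.finite_window (hS : IsStream n S) (a a' : ℤ) :
    {b ∈ S | a < b.1 ∧ b.1 ≤ a'}.Finite :=
  Set.Finite.of_finite_image
    ((Set.finite_Ioc a a').subset (by rintro _ ⟨b, ⟨-, hb⟩, rfl⟩; exact hb))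
    (hS.injOn_fst.mono fun _ hb => hb.1)

lemma IsStream.ncard_window (hn : 0 < n) (hS : IsStream n S) (a : ℤ) :
    {b ∈ S | a < b.1 ∧ b.1 ≤ a + n}.ncard = streamDensity n S := by
  have hX : Function.Periodic (· ∈ Prod.fst '' S) (n : ℤ) := by
    intro x
    refine propext ⟨?_, ?_⟩
    · rintro ⟨b, hb, hbx⟩
      exact ⟨_, hS.add_mul_mem hb (-1), by simp [hbx]⟩
    · rintro ⟨b, hb, rfl⟩
      exact ⟨_, hS.add_mul_mem hb 1, by simp⟩
  calc {b ∈ S | a < b.1 ∧ b.1 ≤ a + n}.ncard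
      = (Prod.fst '' S ∩ Set.Ioc a (a + n)).ncard := by
        rw [← (hS.injOn_fst.mono fun _ hb => hb.1).ncard_image]
        congr 1
        ext x
        simp only [Set.mem_image, Set.mem_inter_iff, Set.mem_Ioc, Set.mem_sep_iff]
        constructor
        · rintro ⟨b, ⟨hb, h⟩, rfl⟩
          exact ⟨⟨b, hb, rfl⟩, h⟩
        · rintro ⟨⟨b, hb, rfl⟩, h⟩
          exact ⟨b, ⟨hb, h⟩, rfl⟩
    _ = (Prod.fst '' S ∩ Set.Ioc 0 (0 + n)).ncard :=
        ncard_inter_Ioc_eq_of_periodic (by exact_mod_cast hn) hX a 0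
    _ = streamDensity n S := by
        unfold streamDensity
        congr 1
        ext x
        simp only [Set.mem_inter_iff, Set.mem_image, Prod.exists, exists_and_right,
          exists_eq_right, Set.mem_Ioc, zero_add, Set.mem_ofPred_eq]
        exact ⟨fun ⟨h, h1, h2⟩ => ⟨h1, h2, h⟩, fun ⟨h1, h2, h⟩ => ⟨h, h1, h2⟩⟩

end Stream

def IsProperNumbering (n : ℕ) (S : Set (ℤ × ℤ)) (f : ℤ × ℤ → ℤ) : Prop :=
  (∀ b ∈ S, ∀ b' ∈ S, b.1 < b'.1 → f b < f b') ∧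
  ∀ b ∈ S, f (b.1 + n, b.2 + n) = f b + streamDensity n S

namespace IsProperNumbering
variable {n : ℕ} {S : Set (ℤ × ℤ)} {f g : ℤ × ℤ → ℤ} {c c' : ℤ × ℤ}

lemma le_of_fst_le (hS : IsStream n S) (hf : IsProperNumbering n S f) (hc : c ∈ S)
    (hc' : c' ∈ S) (h : c.1 ≤ c'.1) : f c ≤ f c' := by
  rcases h.lt_or_eq with h | h
  · exact (hf.1 c hc c' hc' h).le
  · rw [hS.2.2 c c' hc hc' h]

lemma injOn (hS : IsStream n S) (hf : IsProperNumbering n S f) : Set.InjOn f S := by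
  intro b hb b' hb' h
  rcases lt_trichotomy b.1 b'.1 with h' | h' | h'
  · exact absurd h (hf.1 b hb b' hb' h').ne
  · exact hS.2.2 b b' hb hb' h'
  · exact absurd h (hf.1 b' hb' b hb h').ne'

lemma ncard_window_le_sub (hS : IsStream n S) (hf : IsProperNumbering n S f) (hc : c ∈ S)
    (hc' : c' ∈ S) (h : c.1 ≤ c'.1) :
    ({b ∈ S | c.1 < b.1 ∧ b.1 ≤ c'.1}.ncard : ℤ) ≤ f c' - f c := by
  have hmaps : ∀ b ∈ {b ∈ S | c.1 < b.1 ∧ b.1 ≤ c'.1}, f b ∈ Set.Ioc (f c) (f c') :=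
    fun b ⟨hb, h1, h2⟩ => ⟨hf.1 c hc b hb h1, hf.le_of_fst_le hS hb hc' h2⟩
  have := Set.ncard_le_ncard_of_injOn f hmaps ((hf.injOn hS).mono fun _ hb => hb.1)
  rw [← Finset.coe_Ioc, Set.ncard_coe_finset, Int.card_Ioc] at this
  have hcc' := hf.le_of_fst_le hS hc hc' h
  omega

lemma sub_eq_ncard_window (hn : 0 < n) (hS : IsStream n S) (hf : IsProperNumbering n S f)
    (hc : c ∈ S) (hc' : c' ∈ S) (h : c.1 ≤ c'.1) (h' : c'.1 ≤ c.1 + n) :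
    f c' - f c = {b ∈ S | c.1 < b.1 ∧ b.1 ≤ c'.1}.ncard := by
  have hsplit : {b ∈ S | c.1 < b.1 ∧ b.1 ≤ c.1 + n} =
      {b ∈ S | c.1 < b.1 ∧ b.1 ≤ c'.1} ∪ {b ∈ S | c'.1 < b.1 ∧ b.1 ≤ c.1 + n} := by
    ext b
    simp only [Set.mem_union, Set.mem_sep_iff]
    constructor
    · rintro ⟨hb, h1, h2⟩
      exact (le_or_gt b.1 c'.1).imp (fun h3 => ⟨hb, h1, h3⟩) (fun h3 => ⟨hb, h3, h2⟩)
    · rintro (⟨hb, h1, h2⟩ | ⟨hb, h1, h2⟩)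
      exacts [⟨hb, h1, h2.trans h'⟩, ⟨hb, h.trans_lt h1, h2⟩]
  have hdisj :
      Disjoint {b ∈ S | c.1 < b.1 ∧ b.1 ≤ c'.1} {b ∈ S | c'.1 < b.1 ∧ b.1 ≤ c.1 + n} :=
    Set.disjoint_left.mpr fun b hb hb' => absurd hb.2.2 (not_le.mpr hb'.2.1)
  have hcount := hS.ncard_window hn c.1
  rw [hsplit, Set.ncard_union_eq hdisj (hS.finite_window _ _) (hS.finite_window _ _)] at hcount
  have h₁ := hf.ncard_window_le_sub hS hc hc' h
  have h₂ := hf.ncard_window_le_sub hS hc' ((hS.1 c).mp hc) h'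
  dsimp only at h₂
  have h₃ := hf.2 c hc
  rw [← hcount] at h₃
  push_cast at h₃
  omega

lemma eq_add_one (hn : 0 < n) (hS : IsStream n S) (hf : IsProperNumbering n S f) (hc : c ∈ S)
    (hc' : c' ∈ S) (hlt : c.1 < c'.1) (hcons : ∀ b ∈ S, b.1 ≤ c.1 ∨ c'.1 ≤ b.1) :
    f c' = f c + 1 := by
  have hper : c'.1 ≤ c.1 + n := (hcons _ ((hS.1 c).mp hc)).resolve_left (by simp; omega)
  have hwindow : {b ∈ S | c.1 < b.1 ∧ b.1 ≤ c'.1} = {c'} := by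
    ext b
    simp only [Set.mem_sep_iff, Set.mem_singleton_iff]
    constructor
    · rintro ⟨hb, h1, h2⟩
      exact hS.2.2 b c' hb hc' (le_antisymm h2 ((hcons b hb).resolve_left h1.not_ge))
    · rintro rfl
      exact ⟨hc', hlt, le_rfl⟩
  have := hf.sub_eq_ncard_window hn hS hc hc' hlt.le hper
  rw [hwindow, Set.ncard_singleton] at this
  omega

lemma sub_eq_sub (hn : 0 < n) (hS : IsStream n S) (hf : IsProperNumbering n S f)
    (hg : IsProperNumbering n S g) (hc : c ∈ S) (hc' : c' ∈ S) : g c' - f c' = g c - f c := by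
  wlog h : c.1 ≤ c'.1 generalizing c c'
  · exact (this hc' hc (le_of_not_ge h)).symm
  have hn' : (1 : ℤ) ≤ n := by exact_mod_cast hn
  obtain ⟨k, hk⟩ : ∃ k : ℕ, c'.1 ≤ c.1 + k * n :=
    ⟨(c'.1 - c.1).toNat, by nlinarith [Int.self_le_toNat (c'.1 - c.1)]⟩
  induction k generalizing c with
  | zero => rw [hS.2.2 c c' hc hc' (by simp at hk; omega)]
  | succ k ih =>
    by_cases h' : c'.1 ≤ c.1 + n
    · have := hf.sub_eq_ncard_window hn hS hc hc' h h'
      have := hg.sub_eq_ncard_window hn hS hc hc' h h'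
      omega
    · rw [ih ((hS.1 c).mp hc) (by dsimp only; omega) (by push_cast at hk; dsimp only; linarith),
        hf.2 c hc, hg.2 c hc]
      ring

end IsProperNumbering

section Channel
variable {n : ℕ} {W C C₁ C₂ : Set (ℤ × ℤ)} {d d₁ d₂ : ℤ × ℤ → ℤ} {b c c' : ℤ × ℤ}

lemma IsChannel.streamDensity_eq (h₁ : IsChannel n W C₁) (h₂ : IsChannel n W C₂) :
    streamDensity n C₁ = streamDensity n C₂ :=
  le_antisymm (h₂.2.2 C₁ h₁.1 h₁.2.1) (h₁.2.2 C₂ h₂.1 h₂.2.1)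

lemma IsChannelNumbering.isProperNumbering (hW : IsPartialPerm n W) (hC₁ : IsChannel n W C₁)
    (hd : IsChannelNumbering n W C₁ d) (hC : IsChannel n W C) : IsProperNumbering n C d := by
  refine ⟨fun b hb b' hb' h => ?_, fun b hb => ?_⟩
  · have := hd.add_one_le (hC.2.1 hb) (hC.2.1 hb') h (hC.1.2.1 b b' hb hb' h)
    omega
  · rw [hd.map_add_period hW hC₁.1 (hC.2.1 hb), hC₁.streamDensity_eq hC]

lemma IsChannelNumbering.sub_eq_sub_of_mem (hn : 0 < n) (hW : IsPartialPerm n W)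
    (hC₁ : IsChannel n W C₁) (hd₁ : IsChannelNumbering n W C₁ d₁) (hC₂ : IsChannel n W C₂)
    (hd₂ : IsChannelNumbering n W C₂ d₂) (hC : IsChannel n W C) (hc : c ∈ C) (hc' : c' ∈ C) :
    d₂ c' - d₁ c' = d₂ c - d₁ c :=
  IsProperNumbering.sub_eq_sub hn hC.1 (hd₁.isProperNumbering hW hC₁ hC)
    (hd₂.isProperNumbering hW hC₂ hC) hc hc'

lemma IsChannelNumbering.sub_le_sub (hn : 0 < n) (hW : IsPartialPerm n W)
    (hC₁ : IsChannel n W C₁) (hd₁ : IsChannelNumbering n W C₁ d₁) (hC₂ : IsChannel n W C₂)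
    (hd₂ : IsChannelNumbering n W C₂ d₂) (hc : c ∈ C₁) (hb : b ∈ W) :
    d₂ c - d₁ c ≤ d₂ b - d₁ b := by
  obtain ⟨c₀, hc₀, h⟩ := hd₁.exists_mem_sub_le hd₂ hb
  rwa [hd₁.sub_eq_sub_of_mem hn hW hC₁ hC₂ hd₂ hC₁ hc₀ hc]

lemma IsChannelNumbering.sub_nonneg (hn : 0 < n) (hW : IsPartialPerm n W)
    (hC₁ : IsChannel n W C₁) (hd₁ : IsChannelNumbering n W C₁ d₁) (hC₂ : IsChannel n W C₂)
    (hd₂ : IsChannelNumbering n W C₂ d₂) (hc : c ∈ C₁) (hdc : d₂ c = d₁ c) (hb : b ∈ W) :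
    0 ≤ d₂ b - d₁ b := by
  linarith [hd₁.sub_le_sub hn hW hC₁ hC₂ hd₂ hc hb]

lemma IsChannelNumbering.sub_eq_sub_of_same (hn : 0 < n) (hW : IsPartialPerm n W)
    (hC : IsChannel n W C) (hd₁ : IsChannelNumbering n W C d₁)
    (hd₂ : IsChannelNumbering n W C d₂) (hc : c ∈ C) (hb : b ∈ W) :
    d₂ b - d₁ b = d₂ c - d₁ c := by
  have h₁ := hd₁.sub_le_sub hn hW hC hC hd₂ hc hb
  have h₂ := hd₂.sub_le_sub hn hW hC hC hd₁ hc hb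
  omega

end Channel

def IsSoutheastOf (B : Set (ℤ × ℤ)) (z : ℤ × ℤ) : Prop :=
  ∃ b ∈ B, b.1 < z.1 ∧ z.2 < b.2

section Southeast
variable {n : ℕ} {W A B C X : Set (ℤ × ℤ)} {d dA dB dC : ℤ × ℤ → ℤ} {c w z : ℤ × ℤ}

lemma SWle.not_isSoutheastOf (hC : IsStream n C) (hSW : SWle B C) (hz : z ∈ C) :
    ¬ IsSoutheastOf B z := by
  rintro ⟨b, hb, h1, h2⟩
  obtain ⟨c, hc, hc1, hc2⟩ := hSW b hb
  exact (h2.trans_le hc2).not_gt (hC.2.1 c z hc hz (hc1.trans_lt h1))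

lemma SWle.mem_or_isSoutheastOf (hW : IsPartialPerm n W) (hAW : A ⊆ W) (hBW : B ⊆ W)
    (hSW : SWle A B) (hz : z ∈ A) : z ∈ B ∨ IsSoutheastOf B z := by
  obtain ⟨b, hb, h1, h2⟩ := hSW z hz
  by_cases hbz : b = z
  · exact Or.inl (hbz ▸ hb)
  refine Or.inr ⟨b, hb, h1.lt_of_ne fun h => hbz ?_, h2.lt_of_ne fun h => hbz ?_⟩
  · exact hW.2.1 b z (hBW hb) (hAW hz) h
  · exact hW.2.2 b z (hBW hb) (hAW hz) h.symm

lemma exists_mem_le_of_step_leaving_southeast (hn : 0 < n) (hW : IsPartialPerm n W)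
    (hX : IsChannel n W X) (hd : IsChannelNumbering n W X d) (hB : IsChannel n W B)
    (hw : w ∈ W) (hz : z ∈ W) (hzB : z ∉ B) (hwB : IsSoutheastOf B w)
    (hzB' : ¬ IsSoutheastOf B z) (h1 : w.1 < z.1) :
    ∃ q ∈ B, q.1 < z.1 ∧ q.2 < z.2 ∧ d w ≤ d q := by
  obtain ⟨b, hb, hb1, hb2⟩ := hwB
  obtain ⟨g, hg, f, hf, hgz, hzf, hcons⟩ := hB.1.exists_consecutive_fst hn ⟨b, hb⟩ z.1
  replace hzf : z.1 < f.1 :=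
    hzf.lt_of_ne fun h => hzB (hW.2.1 f z (hB.2.1 hf) hz h.symm ▸ hf)
  have hgz2 : g.2 < z.2 := by
    by_contra! h
    rcases h.lt_or_eq with h | h
    · exact hzB' ⟨g, hg, hgz, h⟩
    · exact hzB (hW.2.2 g z (hB.2.1 hg) hz h.symm ▸ hg)
  have hwf : d w + 1 ≤ d f := hd.add_one_le hw (hB.2.1 hf) (h1.trans hzf)
    (hb2.trans ((hB.1.fst_lt_iff_snd_lt hb hf).mp (hb1.trans (h1.trans hzf))))
  have := (hd.isProperNumbering hW hX hB).eq_add_one hn hB.1 hg hf (hgz.trans hzf) hcons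
  exact ⟨g, hg, hgz, hgz2, by omega⟩

lemma exists_mem_le_of_step_entering_southeast (hn : 0 < n) (hW : IsPartialPerm n W)
    (hX : IsChannel n W X) (hd : IsChannelNumbering n W X d) (hB : IsChannel n W B)
    (hw : w ∈ W) (hz : z ∈ W) (hwB : w ∉ B) (hzB : z ∉ B) (hwB' : ¬ IsSoutheastOf B w)
    (hzB' : IsSoutheastOf B z) (h2 : w.2 < z.2) :
    ∃ q ∈ B, q.1 < z.1 ∧ q.2 < z.2 ∧ d w ≤ d q := by
  obtain ⟨b, hb, hb1, hb2⟩ := hzB'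
  obtain ⟨g, hg, f, hf, hgz, hzf, hcons⟩ := hB.1.exists_consecutive_snd hn ⟨b, hb⟩ z.2
  replace hzf : z.2 < f.2 :=
    hzf.lt_of_ne fun h => hzB (hW.2.2 f z (hB.2.1 hf) hz h.symm ▸ hf)
  have hgf : g.1 < f.1 := (hB.1.fst_lt_iff_snd_lt hg hf).mpr (hgz.trans hzf)
  have hfz : f.1 < z.1 := by
    refine lt_of_le_of_lt ((hcons b hb).resolve_left fun h => ?_) hb1
    exact (hb2.trans_le ((hB.1.fst_le_iff_snd_le hb hg).mp h)).not_gt hgz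
  have hwf : w.1 < f.1 := by
    by_contra! h
    rcases h.lt_or_eq with h | h
    · exact hwB' ⟨f, hf, h, h2.trans hzf⟩
    · exact hwB (hW.2.1 f w (hB.2.1 hf) hw h ▸ hf)
  have := hd.add_one_le hw (hB.2.1 hf) hwf (h2.trans hzf)
  have := (hd.isProperNumbering hW hX hB).eq_add_one hn hB.1 hg hf hgf hcons
  exact ⟨g, hg, hgf.trans hfz, hgz, by omega⟩

/-- `P` is one side of `B`: the bound on `d - dB` holds on `B`, propagates along the steps of a
maximal `d`-path that stay in `P ∪ B`, and `hcross` reroutes through `B` a step entering `P`. -/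
lemma IsChannelNumbering.sub_le_of_crossing {P : ℤ × ℤ → Prop} {κ : ℤ}
    (hd : IsChannelNumbering n W X d) (hdB : IsChannelNumbering n W C dB) (hBW : B ⊆ W)
    (hκ : ∀ c ∈ B, d c - dB c ≤ κ) (hbase : ∀ x ∈ X, P x → x ∈ B)
    (hcross : ∀ w z, w ∈ W → z ∈ W → w ∉ B → z ∉ B → ¬ P w → P z → w.1 < z.1 → w.2 < z.2 →
      ∃ q ∈ B, q.1 < z.1 ∧ q.2 < z.2 ∧ d w ≤ d q)
    (hz : z ∈ W) (hPz : P z) : d z - dB z ≤ κ := by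
  obtain ⟨a, ha, k, haz, hdz⟩ := hd.exists_reaches hz
  induction k generalizing z with
  | zero =>
    rw [← haz.eq_of_zero] at hPz ⊢
    exact hκ a (hbase a ha hPz)
  | succ k ih =>
    by_cases hzB : z ∈ B
    · exact hκ z hzB
    obtain ⟨w, haw, h1, h2, -⟩ := reaches_succ_iff.mp haz
    have hw := haw.mem_right
    have hdw : d w = d a + k := by
      have := hd.add_one_le hw hz h1 h2
      have := hd.add_le haw
      push_cast at hdz
      omega
    have hdBw := hdB.add_one_le hw hz h1 h2
    push_cast at hdz
    by_cases hw' : w ∈ B ∨ P w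
    · have := hw'.elim (hκ w) fun hPw => ih hw hPw haw hdw
      omega
    · obtain ⟨hwB, hPw⟩ := not_or.mp hw'
      obtain ⟨q, hq, hq1, hq2, hwq⟩ := hcross w z hw hz hwB hzB hPw hPz h1 h2
      have := hκ q hq
      have := hdB.add_one_le (hBW hq) hz hq1 hq2
      omega

theorem IsChannelNumbering.sub_le_sub_of_isSoutheastOf (hn : 0 < n) (hW : IsPartialPerm n W)
    (hB : IsChannel n W B) (hdB : IsChannelNumbering n W B dB) (hC : IsChannel n W C)
    (hdC : IsChannelNumbering n W C dC) (hSW : SWle B C) (hz : z ∈ W)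
    (hzB : z ∈ B ∨ IsSoutheastOf B z) (hc : c ∈ B) : dC z - dB z ≤ dC c - dB c :=
  hdC.sub_le_of_crossing hdB hB.2.1
    (fun _ hc' => (hdB.sub_eq_sub_of_mem hn hW hB hC hdC hB hc hc').le)
    (fun _ hx hPx => hPx.resolve_right (hSW.not_isSoutheastOf hC.1 hx))
    (fun _ _ hw hz hwB hzB hPw hPz _ h2 => exists_mem_le_of_step_entering_southeast hn hW hC hdC
      hB hw hz hwB hzB (not_or.mp hPw).2 (hPz.resolve_left hzB) h2)
    hz hzB

theorem IsChannelNumbering.sub_le_sub_of_not_isSoutheastOf (hn : 0 < n)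
    (hW : IsPartialPerm n W) (hA : IsChannel n W A) (hdA : IsChannelNumbering n W A dA)
    (hB : IsChannel n W B) (hdB : IsChannelNumbering n W B dB) (hSW : SWle A B) (hz : z ∈ W)
    (hzB : ¬ IsSoutheastOf B z) (hc : c ∈ B) : dA z - dB z ≤ dA c - dB c :=
  hdA.sub_le_of_crossing hdB hB.2.1
    (fun _ hc' => (hdB.sub_eq_sub_of_mem hn hW hB hA hdA hB hc hc').le)
    (fun _ hx hPx => (hSW.mem_or_isSoutheastOf hW hA.2.1 hB.2.1 hx).resolve_right hPx)
    (fun _ _ hw hz _ hzB hPw hPz h1 _ => exists_mem_le_of_step_leaving_southeast hn hW hA hdA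
      hB hw hz hzB (not_not.mp hPw) hPz h1)
    hz hzB

end Southeast

/-- Triangle inequality for distances between channels: given channels
`C₁, C₂, C₃` with channel numberings normalized pairwise (agreeing on the
smaller channel), the distances satisfy `h₁₃ ≤ h₁₂ + h₂₃`, with equality
whenever `C₁ ≤_SW C₂ ≤_SW C₃`. -/
theorem stmt16 (n : ℕ) (hn : 0 < n) (W C₁ C₂ C₃ : Set (ℤ × ℤ))
    (hW : IsPartialPerm n W)
    (hC₁ : IsChannel n W C₁) (hC₂ : IsChannel n W C₂) (hC₃ : IsChannel n W C₃)
    (d₁ d₂ d₃ d₃' : ℤ × ℤ → ℤ)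
    (hd₁ : IsChannelNumbering n W C₁ d₁)
    (hd₂ : IsChannelNumbering n W C₂ d₂) (hag₁₂ : ∃ b ∈ C₁, d₂ b = d₁ b)
    (hd₃ : IsChannelNumbering n W C₃ d₃) (hag₂₃ : ∃ b ∈ C₂, d₃ b = d₂ b)
    (hd₃' : IsChannelNumbering n W C₃ d₃') (hag₁₃ : ∃ b ∈ C₁, d₃' b = d₁ b)
    (h₁₂ h₂₃ h₁₃ : ℤ)
    (hh₁₂ : ∃ b ∈ C₂, |d₂ b - d₁ b| = h₁₂)
    (hh₂₃ : ∃ b ∈ C₃, |d₃ b - d₂ b| = h₂₃)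
    (hh₁₃ : ∃ b ∈ C₃, |d₃' b - d₁ b| = h₁₃) :
    h₁₃ ≤ h₁₂ + h₂₃ ∧ (SWle C₁ C₂ → SWle C₂ C₃ → h₁₃ = h₁₂ + h₂₃) := by
  obtain ⟨a, ha, hda⟩ := hag₁₂
  obtain ⟨a₂, ha₂, hda₂⟩ := hag₂₃
  obtain ⟨a₃, ha₃, hda₃⟩ := hag₁₃
  obtain ⟨w₂, hw₂, rfl⟩ := hh₁₂
  obtain ⟨w₃, hw₃, rfl⟩ := hh₂₃
  obtain ⟨w, hw, rfl⟩ := hh₁₃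
  have haW := hC₁.2.1 ha
  have hwW := hC₃.2.1 hw
  rw [abs_of_nonneg (hd₁.sub_nonneg hn hW hC₁ hC₂ hd₂ ha hda (hC₂.2.1 hw₂)),
    abs_of_nonneg (hd₂.sub_nonneg hn hW hC₂ hC₃ hd₃ ha₂ hda₂ (hC₃.2.1 hw₃)),
    abs_of_nonneg (hd₁.sub_nonneg hn hW hC₁ hC₃ hd₃' ha₃ hda₃ hwW)]
  have hsplit : d₃' w - d₁ w = (d₂ w - d₁ w) + (d₃ w₃ - d₂ w₃) - (d₃ a - d₂ a) := by
    have := hd₂.sub_eq_sub_of_mem hn hW hC₂ hC₃ hd₃ hC₃ hw₃ hw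
    have := hd₃.sub_eq_sub_of_same hn hW hC₃ hd₃' hw haW
    have := hd₁.sub_eq_sub_of_mem hn hW hC₁ hC₃ hd₃' hC₁ ha₃ ha
    linarith
  have hu := hd₂.sub_le_sub hn hW hC₂ hC₁ hd₁ hw₂ hwW
  have hv := hd₂.sub_nonneg hn hW hC₂ hC₃ hd₃ ha₂ hda₂ haW
  refine ⟨by linarith, fun h₁₂SW h₂₃SW => ?_⟩
  have hu' := hd₁.sub_le_sub_of_not_isSoutheastOf hn hW hC₁ hC₂ hd₂ h₁₂SW hwW
    (h₂₃SW.not_isSoutheastOf hC₃.1 hw) hw₂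
  have hv' := hd₂.sub_le_sub_of_isSoutheastOf hn hW hC₂ hC₃ hd₃ h₂₃SW haW
    (h₁₂SW.mem_or_isSoutheastOf hW hC₁.2.1 hC₂.2.1 ha) ha₂
  linarith
end

section
/- The map w ↦ (sgn_𝔓(w), sgn_𝔔(w)) from the extended affine symmetric group to pairs of increasing words of length n is injective. -/
/-
Each insertion step is invertible. If the last entry of `𝔔` equals the step counter, the step
appended its letter to `𝔓`; otherwise the last letter `n + b` of the word names the bumped entry
`b`, and the bumping letter is the largest entry of `𝔓` below `b`. A step can only get stuck if
the inserted letter already lies in `𝔓`. This never happens: label the letter `u i` by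
`i mod n`; the labels on `𝔓` and the word stay distinct, because `n + b` carries the label of `b`.
A terminating run ends with an append, so its length is the last entry of `𝔔`. Undoing that many
steps from `(length, 𝔓, 𝔔, [])` recovers the word `u 1, …, u n`, which determines `u` by
periodicity.
-/

theorem Equiv.Perm.symm_apply_add_of_forall {G : Type*} [Add G] {u : Equiv.Perm G} {m : G}
    (hu : ∀ i, u (i + m) = u i + m) (x : G) : u.symm (x + m) = u.symm x + m :=
  u.symm_apply_eq.2 (by rw [hu, u.apply_symm_apply])

theorem eq_of_apply_add_of_eq_on_window {m : ℤ} (hm : 0 < m) {u v : ℤ → ℤ}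
    (hu : ∀ i, u (i + m) = u i + m) (hv : ∀ i, v (i + m) = v i + m)
    (h : ∀ j : ℕ, (j : ℤ) < m → u (j + 1) = v (j + 1)) : u = v := by
  have hper : Function.Periodic (fun x => u (x + 1) - v (x + 1)) m := fun x => by
    simp only [add_right_comm x m 1, hu, hv]
    ring
  funext i
  obtain ⟨j, ⟨hj₀, hjm⟩, hij⟩ := hper.exists_mem_Ico₀ hm (i - 1)
  lift j to ℕ using hj₀
  have := h j hjm
  simp only [sub_add_cancel] at hij
  omega

namespace List

variable {β : Type*}

theorem map_ite_append_cons [DecidableEq β] {a b : β} {l₁ l₂ : List β} (h₁ : b ∉ l₁)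
    (h₂ : b ∉ l₂) : (l₁ ++ b :: l₂).map (fun x => if x = b then a else x) = l₁ ++ a :: l₂ := by
  have key : ∀ l : List β, b ∉ l → l.map (fun x => if x = b then a else x) = l := fun l hl =>
    (map_congr_left (g := id) fun x hx => if_neg (ne_of_mem_of_not_mem hx hl)).trans (map_id l)
  simp [key l₁ h₁, key l₂ h₂]

variable [LinearOrder β] {a b : β} {l : List β}

theorem exists_find?_lt_eq_some (ha : a ∉ l) (h : ¬ ∀ p ∈ l, p < a) :
    ∃ b, l.find? (fun p => decide (a < p)) = some b := by
  push Not at h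
  obtain ⟨p, hp, hap⟩ := h
  rw [← Option.isSome_iff_exists, find?_isSome]
  exact ⟨p, hp, by simpa using lt_of_le_of_ne hap fun h => ha (h ▸ hp)⟩

theorem exists_eq_append_cons_of_find?_lt_eq_some (ha : a ∉ l)
    (hb : l.find? (fun p => decide (a < p)) = some b) :
    a < b ∧ ∃ l₁ l₂, l = l₁ ++ b :: l₂ ∧ ∀ x ∈ l₁, x < a := by
  obtain ⟨hab, l₁, l₂, rfl, hl₁⟩ := find?_eq_some_iff_append.1 hb
  refine ⟨by simpa using hab, l₁, l₂, rfl, fun x hx => ?_⟩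
  have hxa : x ≠ a := fun hxa => ha (by simp [← hxa, hx])
  exact lt_of_le_of_ne (by simpa using hl₁ x hx) hxa

end List

namespace SignInsertion

abbrev State := ℤ × List ℤ × List ℤ × List ℤ

variable {n : ℕ} {c a b : ℤ} {P P₁ P₂ Q w : List ℤ} {α : Type*} {f : ℤ → α}

theorem signStep_of_forall_lt (h : ∀ p ∈ P, p < a) :
    signStep n (c, P, Q, a :: w) = (c + 1, P ++ [a], Q ++ [c + 1], w) := by
  simp only [signStep, if_pos h]

theorem signStep_of_find?_eq_some (h : ¬ ∀ p ∈ P, p < a)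
    (hb : P.find? (fun p => decide (a < p)) = some b) :
    signStep n (c, P, Q, a :: w) =
      (c + 1, P.map (fun x => if x = b then a else x), Q, w ++ [(n : ℤ) + b]) := by
  simp only [signStep, if_neg h, hb]

theorem signStep_of_word_eq_nil {s : State} (h : s.2.2.2 = []) : signStep n s = s := by
  obtain ⟨c, P, Q, w⟩ := s
  subst h
  rfl

def unsignStep (n : ℕ) : State → State
  | (c, P, Q, w) =>
    if Q.getLast? = some c then (c - 1, P.dropLast, Q.dropLast, P.getLastD 0 :: w)
    else
      let b := w.getLastD 0 - n
      let a := (P.filter (· < b)).getLastD 0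
      (c - 1, P.map (fun x => if x = a then b else x), Q, a :: w.dropLast)

theorem unsignStep_append :
    unsignStep n (c + 1, P ++ [a], Q ++ [c + 1], w) = (c, P, Q, a :: w) := by
  simp [unsignStep]

theorem unsignStep_bump (hQ : ∀ q ∈ Q, q ≤ c) (hP₂ : ∀ x ∈ P₂, b < x) (hP₁ : ∀ x ∈ P₁, x < a)
    (hab : a < b) :
    unsignStep n (c + 1, P₁ ++ a :: P₂, Q, w ++ [(n : ℤ) + b]) =
      (c, P₁ ++ b :: P₂, Q, a :: w) := by
  have hQlast : Q.getLast? ≠ some (c + 1) := fun h => by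
    have := hQ _ (List.mem_of_getLast? h)
    omega
  have hfilter : (P₁ ++ a :: P₂).filter (· < b) = P₁ ++ [a] := by
    rw [List.filter_append, List.filter_cons_of_pos (by simpa using hab),
      List.filter_eq_self.2 fun x hx => by simpa using (hP₁ x hx).trans hab,
      List.filter_eq_nil_iff.2 fun x hx => by simpa using (hP₂ x hx).le]
  have hmap := List.map_ite_append_cons (a := b) (fun h => (hP₁ a h).false)
    fun h => (hab.trans (hP₂ a h)).false
  simp only [unsignStep, if_neg hQlast, List.getLastD_concat, add_sub_cancel_left, hfilter,
    List.dropLast_concat, hmap, add_sub_cancel_right]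

structure Invariant (f : ℤ → α) (s : State) : Prop where
  sorted : s.2.1.Pairwise (· < ·)
  nodup : ((s.2.1 ++ s.2.2.2).map f).Nodup
  le_counter : ∀ q ∈ s.2.2.1, q ≤ s.1
  getLast?_eq_of_word_eq_nil : s.2.2.2 = [] → s.2.2.1.getLast? = some s.1

theorem Invariant.head_notMem (hs : Invariant f (c, P, Q, a :: w)) : a ∉ P := fun ha => by
  have := hs.nodup
  simp only [List.map_append, List.map_cons, List.nodup_append, List.mem_map] at this
  exact this.2.2 _ ⟨a, ha, rfl⟩ _ (List.mem_cons_self ..) rfl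

theorem Invariant.append (hs : Invariant f (c, P, Q, a :: w)) (h : ∀ p ∈ P, p < a) :
    Invariant f (c + 1, P ++ [a], Q ++ [c + 1], w) where
  sorted := List.pairwise_append.2 ⟨hs.sorted, by simp, by simpa using h⟩
  nodup := by simpa using hs.nodup
  le_counter q hq := by
    rcases List.mem_append.1 hq with hq | hq
    · exact (hs.le_counter q hq).trans (by omega)
    · simp_all
  getLast?_eq_of_word_eq_nil _ := by simp

theorem Invariant.bump (hf : Function.Periodic f n)
    (hs : Invariant f (c, P₁ ++ b :: P₂, Q, a :: w)) (hP₁ : ∀ x ∈ P₁, x < a) (hab : a < b) :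
    Invariant f (c + 1, P₁ ++ a :: P₂, Q, w ++ [(n : ℤ) + b]) where
  sorted := by
    have := hs.sorted
    simp only [List.pairwise_append, List.pairwise_cons, List.mem_cons] at this ⊢
    refine ⟨this.1, ⟨fun x hx => hab.trans (this.2.1.1 x hx), this.2.1.2⟩, ?_⟩
    rintro x hx y (rfl | hy)
    exacts [hP₁ x hx, this.2.2 x hx y (Or.inr hy)]
  nodup := by
    have hrelabel : ((P₁ ++ a :: P₂) ++ (w ++ [(n : ℤ) + b])).map f =
        ((P₁ ++ a :: P₂) ++ (w ++ [b])).map f := by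
      simp [add_comm (n : ℤ), hf b]
    have hperm : List.Perm ((P₁ ++ a :: P₂) ++ (w ++ [b])) ((P₁ ++ b :: P₂) ++ a :: w) := by
      rw [List.perm_iff_count]
      intro x
      simp only [List.count_append, List.count_cons, List.count_nil]
      omega
    exact hrelabel ▸ (hperm.map f).nodup_iff.2 hs.nodup
  le_counter q hq := (hs.le_counter q hq).trans (by omega)
  getLast?_eq_of_word_eq_nil h := by simp at h

theorem signStep_spec (hf : Function.Periodic f n) {s : State} (hs : Invariant f s)
    (hw : s.2.2.2 ≠ []) :
    Invariant f (signStep n s) ∧ (signStep n s).1 = s.1 + 1 ∧ unsignStep n (signStep n s) = s := by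
  obtain ⟨c, P, Q, _ | ⟨a, w⟩⟩ := s
  · exact absurd rfl hw
  by_cases hall : ∀ p ∈ P, p < a
  · rw [signStep_of_forall_lt hall]
    exact ⟨hs.append hall, rfl, unsignStep_append⟩
  obtain ⟨b, hb⟩ := List.exists_find?_lt_eq_some hs.head_notMem hall
  obtain ⟨hab, P₁, P₂, rfl, hP₁⟩ :=
    List.exists_eq_append_cons_of_find?_lt_eq_some hs.head_notMem hb
  have hP₂ : ∀ x ∈ P₂, b < x := by
    have := hs.sorted
    simp only [List.pairwise_append, List.pairwise_cons] at this
    exact this.2.1.1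
  rw [signStep_of_find?_eq_some hall hb,
    List.map_ite_append_cons (fun h => (hP₁ b h).not_gt hab) fun h => (hP₂ b h).false]
  exact ⟨hs.bump hf hP₁ hab, rfl, unsignStep_bump hs.le_counter hP₂ hP₁ hab⟩

theorem iterate_signStep_spec (hf : Function.Periodic f n) (k : ℕ) {s : State}
    (hs : Invariant f s) (hw : ∀ j < k, ((signStep n)^[j] s).2.2.2 ≠ []) :
    Invariant f ((signStep n)^[k] s) ∧ ((signStep n)^[k] s).1 = s.1 + k ∧
      (unsignStep n)^[k] ((signStep n)^[k] s) = s := by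
  induction k generalizing s with
  | zero => simpa using hs
  | succ k ih =>
    obtain ⟨hs₁, hc₁, hu₁⟩ := signStep_spec hf hs (hw 0 k.succ_pos)
    obtain ⟨hsk, hck, huk⟩ := ih hs₁ fun j hj => hw (j + 1) (by omega)
    refine ⟨hsk, by rw [Function.iterate_succ_apply, hck, hc₁]; push_cast; ring, ?_⟩
    rw [Function.iterate_succ_apply', Function.iterate_succ_apply, huk, hu₁]

theorem exists_iterate_eq_of_word_eq_nil (hf : Function.Periodic f n) {s : State}
    (hs : Invariant f s) {N : ℕ} (hN : ((signStep n)^[N] s).2.2.2 = []) :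
    ∃ K : ℕ, (signStep n)^[N] s = (signStep n)^[K] s ∧
      ((signStep n)^[K] s).1 = s.1 + K ∧
      ((signStep n)^[K] s).2.2.1.getLast? = some (s.1 + K) ∧
      (unsignStep n)^[K] ((signStep n)^[K] s) = s := by
  have hex : ∃ k, ((signStep n)^[k] s).2.2.2 = [] := ⟨N, hN⟩
  set K := Nat.find hex
  have hK : ((signStep n)^[K] s).2.2.2 = [] := Nat.find_spec hex
  obtain ⟨hsK, hcK, huK⟩ := iterate_signStep_spec hf K hs fun j hj => Nat.find_min hex hj
  refine ⟨K, ?_, hcK, hcK ▸ hsK.getLast?_eq_of_word_eq_nil hK, huK⟩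
  obtain ⟨d, hd⟩ := Nat.exists_eq_add_of_le (Nat.find_min' hex hN)
  rw [hd, add_comm, Function.iterate_add_apply,
    Function.iterate_fixed (signStep_of_word_eq_nil hK)]

theorem eq_of_signStep_result_eq {β : Type*} {g : ℤ → β} (hf : Function.Periodic f n)
    (hg : Function.Periodic g n) {s t : State} (hs : Invariant f s) (ht : Invariant g t)
    (hs₀ : s.1 = 0) (ht₀ : t.1 = 0) {N M : ℕ}
    (hN : ((signStep n)^[N] s).2.2.2 = []) (hM : ((signStep n)^[M] t).2.2.2 = [])
    (hP : ((signStep n)^[N] s).2.1 = ((signStep n)^[M] t).2.1)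
    (hQ : ((signStep n)^[N] s).2.2.1 = ((signStep n)^[M] t).2.2.1) :
    s = t := by
  obtain ⟨K, hNK, hcK, hQK, huK⟩ := exists_iterate_eq_of_word_eq_nil hf hs hN
  obtain ⟨L, hML, hcL, hQL, huL⟩ := exists_iterate_eq_of_word_eq_nil hg ht hM
  rw [hNK, hML] at hP hQ
  rw [hNK] at hN
  rw [hML] at hM
  have hKL : K = L := by
    rw [hQ, hQL, hs₀, ht₀, Option.some_inj] at hQK
    omega
  subst hKL
  have hend : (signStep n)^[K] s = (signStep n)^[K] t :=
    Prod.ext (by rw [hcK, hcL, hs₀, ht₀]) (Prod.ext hP (Prod.ext hQ (hN.trans hM.symm)))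
  rw [← huK, ← huL, hend]

theorem periodic_residue_symm {u : Equiv.Perm ℤ} (hu : ∀ i : ℤ, u (i + n) = u i + n) :
    Function.Periodic (fun x => (u.symm x : ZMod n)) n := fun x => by
  simp [Equiv.Perm.symm_apply_add_of_forall hu]

theorem invariant_initial (hn : 0 < n) (u : Equiv.Perm ℤ) :
    Invariant (fun x => (u.symm x : ZMod n))
      ((0 : ℤ), [], [], (List.range n).map (fun j => u ((j : ℤ) + 1))) where
  sorted := List.Pairwise.nil
  nodup := by
    simp only [List.nil_append, bind_pure_comp, List.map_eq_map, List.map_map]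
    refine List.nodup_range.map_on fun j hj k hk hjk => ?_
    simp only [Function.comp_apply, Equiv.symm_apply_apply, Int.cast_add, Int.cast_natCast,
      Int.cast_one, add_left_inj, ZMod.natCast_eq_natCast_iff'] at hjk
    rwa [Nat.mod_eq_of_lt (List.mem_range.1 hj), Nat.mod_eq_of_lt (List.mem_range.1 hk)] at hjk
  le_counter := by simp
  getLast?_eq_of_word_eq_nil h := by
    have := congrArg List.length h
    simp at this
    omega

end SignInsertion

/-- The map `w ↦ (sgn_𝔓 w, sgn_𝔔 w)` is injective on the extended affine
symmetric group: if the sign insertions of `u` and `v` terminate with the same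
pair `(𝔓, 𝔔)`, then `u = v`. -/
theorem stmt17 (n : ℕ) (hn : 0 < n) (u v : Equiv.Perm ℤ)
    (hu : ∀ i : ℤ, u (i + n) = u i + n)
    (hv : ∀ i : ℤ, v (i + n) = v i + n)
    (N M : ℕ)
    (huN : ((signStep n)^[N]
      ((0 : ℤ), [], [], (List.range n).map (fun j => u ((j : ℤ) + 1)))).2.2.2 = [])
    (hvM : ((signStep n)^[M]
      ((0 : ℤ), [], [], (List.range n).map (fun j => v ((j : ℤ) + 1)))).2.2.2 = [])
    (hP : ((signStep n)^[N]
        ((0 : ℤ), [], [], (List.range n).map (fun j => u ((j : ℤ) + 1)))).2.1 =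
      ((signStep n)^[M]
        ((0 : ℤ), [], [], (List.range n).map (fun j => v ((j : ℤ) + 1)))).2.1)
    (hQ : ((signStep n)^[N]
        ((0 : ℤ), [], [], (List.range n).map (fun j => u ((j : ℤ) + 1)))).2.2.1 =
      ((signStep n)^[M]
        ((0 : ℤ), [], [], (List.range n).map (fun j => v ((j : ℤ) + 1)))).2.2.1) :
    u = v := by
  have hinit := SignInsertion.eq_of_signStep_result_eq
    (SignInsertion.periodic_residue_symm hu) (SignInsertion.periodic_residue_symm hv)
    (SignInsertion.invariant_initial hn u) (SignInsertion.invariant_initial hn v)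
    rfl rfl huN hvM hP hQ
  have hword := List.map_inj_left.1 (congrArg (·.2.2.2) hinit)
  refine Equiv.coe_fn_injective (eq_of_apply_add_of_eq_on_window (by omega) hu hv
    fun j hj => hword j ?_)
  simp only [bind_pure_comp, List.map_eq_map, List.mem_map, List.mem_range, Nat.cast_inj]
  exact ⟨j, by omega, rfl⟩
end

section
/- Let w be an extended affine permutation, X ⊆ [1,n], and suppose w restricted to X + nℤ is a channel of w with image values much larger than the values w(y) for y ∉ X (specifically w(y) + n² < w(x) for all x ∈ X, y ∈ [1,n]−X). If v is another such extended affine permutation with the same X satisfying the same hypotheses, and the relative orders of the multisets {v(i·n + x)}_{i∈[0,n−1], x∈X} and {w(i·n + x)}_{i∈[0,n−1], x∈X} coincide, and sgn_𝔔(v restricted to [1,n]−X) = sgn_𝔔(w restricted to [1,n]−X), then sgn_𝔔(v) = sgn_𝔔(w). -/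
/-- `sgn_𝔔` agreement, relationally: whenever the sign insertions of the input
words `l₁` and `l₂` terminate, the final recording words `𝔔` agree. -/
def SgnQEq (n : ℕ) (l₁ l₂ : List ℤ) : Prop :=
  ∀ N M : ℕ,
    ((signStep n)^[N] ((0 : ℤ), [], [], l₁)).2.2.2 = [] →
    ((signStep n)^[M] ((0 : ℤ), [], [], l₂)).2.2.2 = [] →
    ((signStep n)^[N] ((0 : ℤ), [], [], l₁)).2.2.1 =
      ((signStep n)^[M] ((0 : ℤ), [], [], l₂)).2.2.1

/-- The restriction of an extended affine permutation `u` to positions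
`X + nℤ`, as a set of balls. -/
def restrictedGraph (n : ℕ) (u : ℤ → ℤ) (X : Finset ℤ) : Set (ℤ × ℤ) :=
  {p : ℤ × ℤ | u p.1 = p.2 ∧ ∃ x ∈ X, ∃ k : ℤ, p.1 = x + k * n}

/-- The window word of `u` restricted to positions in `Y ⊆ [1, n]`. -/
noncomputable def windowWord (n : ℕ) (Y : Finset ℤ) (u : ℤ → ℤ) : List ℤ :=
  (((Finset.Icc (1 : ℤ) (n : ℤ)).sort (· ≤ ·)).filter (fun y => decide (y ∈ Y))).map u

/-!
Split the window of `u` into the big letters `u x`, `x ∈ X`, and the small ones. Every step of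
sign insertion keeps the residues mod `n` of the letters in `𝔓` and in the word distinct, so it
never stalls, and a letter exceeds the original maximum `M` by at most `n` times the number of
smaller letters in `𝔓`. Hence the small letters and everything they turn into stay below
`M + n² < u x`, while the big letters only become `u (x + k n)`, `k ≥ 0`; since the channel is
a stream, these compare like their positions. So the insertion of the whole window is determined
by the positions of the big letters and by the times at which the insertion of the small letters
pushes, and these times are recorded in `𝔔` of the small letters.
-/

theorem List.map_replace_eq_of_not_mem {α : Type*} [DecidableEq α] {l : List α} {a b : α}
    (hb : b ∉ l) :
    l.map (fun x => if x = b then a else x) = l :=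
  (List.map_congr_left fun x hx => if_neg fun h : x = b => hb (h ▸ hx)).trans (List.map_id _)

theorem List.map_replace_map_of_injOn {α β : Type*} [DecidableEq α] [DecidableEq β]
    {f : α → β} {S : Set α} (hf : Set.InjOn f S) {l : List α} (hl : ∀ r ∈ l, r ∈ S) {p q : α}
    (hq : q ∈ S) :
    (l.map f).map (fun x => if x = f q then f p else x) =
      (l.map fun r => if r = q then p else r).map f := by
  simp only [List.map_map]
  refine List.map_congr_left fun r hr => ?_
  by_cases hrq : r = q
  · simp [hrq]
  · simp [hrq, (hf.ne_iff (hl r hr) hq).2 hrq]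

theorem List.find?_append_of_forall_le {α : Type*} [LinearOrder α] {P l : List α} {a : α}
    (ha : ∀ z ∈ P, z ≤ a) :
    (P ++ l).find? (fun x => decide (a < x)) = l.find? (fun x => decide (a < x)) := by
  rw [List.find?_append, List.find?_eq_none.2 fun z hz => by simpa using ha z hz]
  rfl

theorem List.forall_lt_of_find?_eq_none {α : Type*} [LinearOrder α] {P : List α} {a : α}
    (hfind : P.find? (fun p => decide (a < p)) = none) (ha : a ∉ P) : ∀ p ∈ P, p < a :=
  fun p hp => lt_of_le_of_ne (not_lt.1 (by simpa using List.find?_eq_none.1 hfind p hp))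
    (fun h => ha (h ▸ hp))

abbrev SignState := ℤ × List ℤ × List ℤ × List ℤ

def signRun (n : ℕ) (l : List ℤ) (T : ℕ) : SignState := (signStep n)^[T] (0, [], [], l)

def pushes (s : SignState) : Bool :=
  match s.2.2.2 with
  | [] => false
  | a :: _ => decide (∀ p ∈ s.2.1, p < a)

section SignStep

variable {n : ℕ}

theorem signStep_of_word_eq_nil {s : SignState} (h : s.2.2.2 = []) : signStep n s = s := by
  obtain ⟨c, P, Q, w⟩ := s
  subst h
  rfl

theorem signStep_push {c : ℤ} {P Q w : List ℤ} {a : ℤ} (h : ∀ p ∈ P, p < a) :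
    signStep n (c, P, Q, a :: w) = (c + 1, P ++ [a], Q ++ [c + 1], w) := by
  simp only [signStep, if_pos h]

theorem signStep_bump {c : ℤ} {P Q w : List ℤ} {a b : ℤ}
    (hfind : P.find? (fun p => decide (a < p)) = some b) :
    signStep n (c, P, Q, a :: w) =
      (c + 1, P.map (fun x => if x = b then a else x), Q, w ++ [(n : ℤ) + b]) := by
  have hab : a < b := by simpa using List.find?_some hfind
  have hnot : ¬ ∀ p ∈ P, p < a := fun h =>
    lt_asymm hab (h b (List.mem_of_find?_eq_some hfind))
  simp only [signStep, if_neg hnot, hfind]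

theorem signStep_Q (s : SignState) :
    (signStep n s).2.2.1 = s.2.2.1 ++ if pushes s then [s.1 + 1] else [] := by
  obtain ⟨c, P, Q, _ | ⟨a, w⟩⟩ := s
  · simp [signStep, pushes]
  · by_cases h : ∀ p ∈ P, p < a
    · simpa [signStep_push h, pushes] using h
    · cases hf : P.find? (fun p => decide (a < p))
      · simp [signStep, pushes, h, hf]
      · simp [signStep_bump hf, pushes, h]

theorem signStep_counter {s : SignState} (h : (signStep n s).2.2.2 ≠ []) :
    (signStep n s).1 = s.1 + 1 := by
  obtain ⟨c, P, Q, _ | ⟨a, w⟩⟩ := s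
  · simp [signStep] at h
  · by_cases hp : ∀ p ∈ P, p < a
    · simp [signStep_push hp]
    · cases hf : P.find? (fun p => decide (a < p))
      · simp [signStep, hp, hf] at h
      · simp [signStep_bump hf]

theorem signRun_succ (l : List ℤ) (T : ℕ) :
    signRun n l (T + 1) = signStep n (signRun n l T) :=
  Function.iterate_succ_apply' _ _ _

theorem signRun_eq_of_le {l : List ℤ} {T U : ℕ} (h : (signRun n l T).2.2.2 = []) (hTU : T ≤ U) :
    signRun n l U = signRun n l T := by
  obtain ⟨k, rfl⟩ := Nat.exists_eq_add_of_le hTU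
  induction k with
  | zero => rfl
  | succ k ih => rw [← add_assoc, signRun_succ, ih (by omega), signStep_of_word_eq_nil h]

theorem signRun_counter {l : List ℤ} {T : ℕ} (h : (signRun n l T).2.2.2 ≠ []) :
    (signRun n l T).1 = T := by
  induction T with
  | zero => rfl
  | succ T ih =>
    rw [signRun_succ] at h ⊢
    have halive : (signRun n l T).2.2.2 ≠ [] := fun h' => h (by rw [signStep_of_word_eq_nil h', h'])
    rw [signStep_counter h, ih halive]
    push_cast; rfl

theorem mem_signRun_Q {l : List ℤ} {T : ℕ} {q : ℤ} :
    q ∈ (signRun n l T).2.2.1 ↔ ∃ t < T, pushes (signRun n l t) ∧ q = t + 1 := by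
  induction T with
  | zero => simp [signRun]
  | succ T ih =>
    have hcounter : pushes (signRun n l T) → (signRun n l T).1 = T := fun hp =>
      signRun_counter fun h => by simp [pushes, h] at hp
    rw [signRun_succ, signStep_Q, List.mem_append, ih]
    constructor
    · rintro (⟨t, ht, hpush⟩ | hq)
      · exact ⟨t, by omega, hpush⟩
      · split_ifs at hq with hp
        · exact ⟨T, by omega, hp, by simpa [hcounter hp] using hq⟩
        · simp at hq
    · rintro ⟨t, ht, hp, rfl⟩
      rcases Nat.lt_succ_iff_lt_or_eq.1 ht with ht | rfl
      · exact Or.inl ⟨t, ht, hp, rfl⟩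
      · exact Or.inr (by simp [hp, hcounter hp])

theorem pushes_signRun_of_le {l : List ℤ} {N t : ℕ} (hN : (signRun n l N).2.2.2 = [])
    (ht : N ≤ t) : pushes (signRun n l t) = false := by
  rw [signRun_eq_of_le hN ht]
  simp [pushes, hN]

theorem pushes_signRun_iff {l : List ℤ} {N : ℕ} (hN : (signRun n l N).2.2.2 = []) (t : ℕ) :
    pushes (signRun n l t) ↔ (t + 1 : ℤ) ∈ (signRun n l N).2.2.1 := by
  rw [mem_signRun_Q]
  constructor
  · intro hp
    refine ⟨t, ?_, hp, rfl⟩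
    by_contra hle
    simp [pushes_signRun_of_le hN (not_lt.1 hle)] at hp
  · rintro ⟨t', -, hp, heq⟩
    rwa [show t = t' by omega]

theorem SgnQEq.pushes_eq {l l' : List ℤ} (h : SgnQEq n l l') {N M : ℕ}
    (hN : (signRun n l N).2.2.2 = []) (hM : (signRun n l' M).2.2.2 = []) (t : ℕ) :
    pushes (signRun n l t) = pushes (signRun n l' t) := by
  rw [Bool.eq_iff_iff, pushes_signRun_iff hN, pushes_signRun_iff hM]
  exact iff_of_eq (congrArg _ (h N M hN hM))

end SignStep

def ResNodup (n : ℕ) (s : SignState) : Prop :=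
  ((s.2.1 ++ s.2.2.2).map (fun x : ℤ => (x : ZMod n))).Nodup

section Residues

variable {n : ℕ}

theorem ResNodup.signStep {s : SignState} (h : ResNodup n s) : ResNodup n (signStep n s) := by
  obtain ⟨c, P, Q, _ | ⟨a, w⟩⟩ := s
  · exact h
  by_cases hpush : ∀ p ∈ P, p < a
  · simpa [ResNodup, signStep_push hpush] using h
  cases hf : P.find? (fun p => decide (a < p)) with
  | none =>
    simp only [_root_.signStep, if_neg hpush, hf]
    exact h.sublist (by simp)
  | some b =>
    rw [ResNodup, signStep_bump hf]
    obtain ⟨P₁, P₂, rfl⟩ := List.append_of_mem (List.mem_of_find?_eq_some hf)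
    have hP : (P₁ ++ b :: P₂).Nodup := (List.Nodup.of_map _ h).sublist (by simp)
    have hb₁ : b ∉ P₁ := fun hb => (List.nodup_append.1 hP).2.2 b hb b (by simp) rfl
    have hb₂ : b ∉ P₂ := (List.nodup_cons.1 (List.nodup_append.1 hP).2.1).1
    have hperm : (P₁ ++ a :: P₂ ++ (w ++ [b])).Perm (P₁ ++ b :: P₂ ++ a :: w) := by
      rw [← Multiset.coe_eq_coe]
      simp only [← Multiset.coe_add, ← Multiset.cons_coe, ← Multiset.singleton_add]
      abel
    convert (hperm.map (fun x : ℤ => (x : ZMod n))).nodup_iff.2 h using 1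
    simp [List.map_replace_eq_of_not_mem hb₁, List.map_replace_eq_of_not_mem hb₂]

theorem ResNodup.head_not_mem {c : ℤ} {P Q w : List ℤ} {a : ℤ}
    (h : ResNodup n (c, P, Q, a :: w)) : a ∉ P := fun ha =>
  (List.nodup_append.1 (List.Nodup.of_map _ h)).2.2 a ha a List.mem_cons_self rfl

theorem ResNodup.nodup {s : SignState} (h : ResNodup n s) : s.2.1.Nodup :=
  (List.Nodup.of_map _ h).sublist (List.sublist_append_left _ _)

theorem ResNodup.signRun {l : List ℤ} (h : ResNodup n (0, [], [], l)) (T : ℕ) :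
    ResNodup n (signRun n l T) := by
  induction T with
  | zero => exact h
  | succ T ih => rw [signRun_succ]; exact ih.signStep

end Residues

section Growth

variable {n : ℕ}

theorem countP_lt_le_countP_map_replace (P : List ℤ) {a b : ℤ} (hab : a < b) (z : ℤ) :
    P.countP (fun p => decide (p < z)) ≤
      (P.map (fun x => if x = b then a else x)).countP (fun p => decide (p < z)) := by
  rw [List.countP_map]
  refine List.countP_mono_left fun x _ hx => ?_
  simp only [Function.comp_apply, decide_eq_true_eq] at hx ⊢
  split_ifs with h <;> omega

theorem countP_lt_lt_countP_map_replace {P : List ℤ} {a b : ℤ} (hab : a < b) (hb : b ∈ P) :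
    P.countP (fun p => decide (p < b)) <
      (P.map (fun x => if x = b then a else x)).countP (fun p => decide (p < n + b)) := by
  obtain ⟨P₁, P₂, rfl⟩ := List.append_of_mem hb
  have hmono : ∀ P' : List ℤ, P'.countP (fun p => decide (p < b)) ≤
      (P'.map (fun x => if x = b then a else x)).countP (fun p => decide (p < n + b)) := by
    intro P'
    rw [List.countP_map]
    refine List.countP_mono_left fun x _ hx => ?_
    simp only [Function.comp_apply, decide_eq_true_eq] at hx ⊢
    split_ifs with h <;> omega
  have hab' : a < n + b := by omega
  simp only [List.map_append, List.map_cons, List.countP_append, List.countP_cons, if_pos,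
    lt_irrefl, hab', decide_true, decide_false, Bool.false_eq_true, if_false]
  linarith [hmono P₁, hmono P₂]

structure GrowthBound (n : ℕ) (M : ℤ) (L : ℕ) (s : SignState) : Prop where
  length_le : s.2.1.length + s.2.2.2.length ≤ L
  le : ∀ z ∈ s.2.1 ++ s.2.2.2, z ≤ M + s.2.1.countP (fun p => decide (p < z)) * n

theorem GrowthBound.signStep {M : ℤ} {L : ℕ} {s : SignState} (h : GrowthBound n M L s) :
    GrowthBound n M L (signStep n s) := by
  obtain ⟨c, P, Q, _ | ⟨a, w⟩⟩ := s
  · exact h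
  obtain ⟨hlen, hle⟩ := h
  simp only at hlen hle
  by_cases hpush : ∀ p ∈ P, p < a
  · rw [signStep_push hpush]
    refine ⟨by simp at hlen ⊢; omega, fun z hz => (hle z (by simpa using hz)).trans ?_⟩
    gcongr
    simp
  cases hf : P.find? (fun p => decide (a < p)) with
  | none =>
    simp only [_root_.signStep, if_neg hpush, hf]
    exact ⟨by simp at hlen ⊢; omega, fun z hz => hle z (by simp at hz ⊢; exact Or.inl hz)⟩
  | some b =>
    rw [signStep_bump hf]
    have hab : a < b := by simpa using List.find?_some hf
    have hb : b ∈ P := List.mem_of_find?_eq_some hf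
    refine ⟨by simp at hlen ⊢; omega, fun z hz => ?_⟩
    dsimp only at hz ⊢
    simp only [List.mem_append, List.mem_map, List.mem_cons, List.not_mem_nil, or_false] at hz
    rcases hz with ⟨x, hx, rfl⟩ | hz | rfl
    · have hx' : (if x = b then a else x) ∈ P ++ a :: w := by split_ifs <;> simp [hx]
      refine (hle _ hx').trans ?_
      gcongr
      exact countP_lt_le_countP_map_replace P hab _
    · refine (hle z (by simp [hz])).trans ?_
      gcongr
      exact countP_lt_le_countP_map_replace P hab _
    · have := hle b (by simp [hb])
      have hlt := countP_lt_lt_countP_map_replace (n := n) hab hb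
      have : ((P.countP fun p => decide (p < b)) + 1 : ℤ) ≤
          ((P.map fun x => if x = b then a else x).countP fun p => decide (p < n + b) : ℤ) := by
        exact_mod_cast hlt
      nlinarith

theorem signRun_le {l : List ℤ} {M : ℤ} (hM : ∀ z ∈ l, z ≤ M) (T : ℕ) :
    ∀ z ∈ (signRun n l T).2.1 ++ (signRun n l T).2.2.2, z ≤ M + l.length * n := by
  have h : ∀ T, GrowthBound n M l.length (signRun n l T) := by
    intro T
    induction T with
    | zero => exact ⟨by simp [signRun], by simpa [signRun] using hM⟩
    | succ T ih => rw [signRun_succ]; exact ih.signStep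
  intro z hz
  refine ((h T).le z hz).trans ?_
  have : (signRun n l T).2.1.countP (fun p => decide (p < z)) ≤ l.length :=
    List.countP_le_length.trans (by have := (h T).length_le; omega)
  gcongr

end Growth

def fillHoles (u : ℤ → ℤ) : List (Option ℤ) → List ℤ → List ℤ
  | [], _ => []
  | some p :: pat, s => u p :: fillHoles u pat s
  | none :: _, [] => []
  | none :: pat, a :: s => a :: fillHoles u pat s

section FillHoles

variable (u : ℤ → ℤ)

theorem fillHoles_append_some (p : ℤ) :
    ∀ (pat : List (Option ℤ)) (s : List ℤ), pat.count none = s.length →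
      fillHoles u (pat ++ [some p]) s = fillHoles u pat s ++ [u p]
  | [], [], _ => rfl
  | some q :: pat, s, h => by
    simp only [List.cons_append, fillHoles, fillHoles_append_some p pat s (by simpa using h)]
  | none :: pat, a :: s, h => by
    simp only [List.cons_append, fillHoles, fillHoles_append_some p pat s (by simpa using h)]
  | [], _ :: _, h | none :: _, [], h => by simp at h

theorem fillHoles_append_none (b : ℤ) :
    ∀ (pat : List (Option ℤ)) (s : List ℤ), pat.count none = s.length →
      fillHoles u (pat ++ [none]) (s ++ [b]) = fillHoles u pat s ++ [b]
  | [], [], _ => rfl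
  | some q :: pat, s, h => by
    simp only [List.cons_append, fillHoles, fillHoles_append_none b pat s (by simpa using h)]
  | none :: pat, a :: s, h => by
    simp only [List.cons_append, fillHoles, fillHoles_append_none b pat s (by simpa using h)]
  | [], _ :: _, h | none :: _, [], h => by simp at h

theorem eq_nil_of_fillHoles_eq_nil :
    ∀ {pat : List (Option ℤ)} {s : List ℤ}, pat.count none = s.length →
      fillHoles u pat s = [] → s = []
  | [], s, h, _ => List.length_eq_zero_iff.1 (by simpa using h.symm)
  | none :: _, [], _, _ => rfl
  | some _ :: _, _, _, h | none :: _, _ :: _, _, h => by simp [fillHoles] at h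

end FillHoles

/-- A sign insertion run seen from the run of a subword `s` of small letters. The big letters are
recorded by their positions `p` (standing for the letter `u p`), the small letters only through
the time `t` of the run of `s`, whose remaining word fills the holes `none` of `pat`; in `step`,
`d t` says whether the run of `s` pushes at time `t`. -/
structure Skeleton where
  c : ℤ
  Q : List ℤ
  t : ℕ
  big : List ℤ
  pat : List (Option ℤ)

namespace Skeleton

def step (n : ℕ) (d : ℕ → Bool) : Skeleton → Skeleton
  | ⟨c, Q, t, big, []⟩ => ⟨c, Q, t, big, []⟩
  | ⟨c, Q, t, big, some p :: pat⟩ =>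
    match big.find? (fun q => decide (p < q)) with
    | none => ⟨c + 1, Q ++ [c + 1], t, big ++ [p], pat⟩
    | some q => ⟨c + 1, Q, t, big.map (fun r => if r = q then p else r), pat ++ [some (q + n)]⟩
  | ⟨c, Q, t, big, none :: pat⟩ =>
    if d t then
      match big with
      | [] => ⟨c + 1, Q ++ [c + 1], t + 1, [], pat⟩
      | q :: big => ⟨c + 1, Q, t + 1, big, pat ++ [some (q + n)]⟩
    else ⟨c + 1, Q, t + 1, big, pat ++ [none]⟩

def realize (n : ℕ) (u : ℤ → ℤ) (s : List ℤ) (A : Skeleton) : SignState :=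
  (A.c, (signRun n s A.t).2.1 ++ A.big.map u, A.Q, fillHoles u A.pat (signRun n s A.t).2.2.2)

structure Valid (n : ℕ) (B : Set ℤ) (s : List ℤ) (A : Skeleton) : Prop where
  big_mem : ∀ p ∈ A.big, p ∈ B
  pat_mem : ∀ p, some p ∈ A.pat → p ∈ B
  count_none : A.pat.count none = (signRun n s A.t).2.2.2.length

end Skeleton

structure BigPositions (n : ℕ) (u : ℤ → ℤ) (B : Set ℤ) (s : List ℤ) : Prop where
  add_mem : ∀ p ∈ B, p + n ∈ B
  map_add : ∀ p ∈ B, u (p + n) = u p + n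
  strictMonoOn : StrictMonoOn u B
  lt : ∀ t, ∀ z ∈ (signRun n s t).2.1 ++ (signRun n s t).2.2.2, ∀ p ∈ B, z < u p

namespace Skeleton

variable {n : ℕ} {u : ℤ → ℤ} {B : Set ℤ} {s : List ℤ}

theorem find?_small_append_big (hB : BigPositions n u B s) {t : ℕ} {p : ℤ} (hp : p ∈ B)
    {big : List ℤ} (hbig : ∀ r ∈ big, r ∈ B) :
    ((signRun n s t).2.1 ++ big.map u).find? (fun x => decide (u p < x)) =
      (big.find? (fun q => decide (p < q))).map u := by
  rw [List.find?_append_of_forall_le fun z hz => (hB.lt t z (List.mem_append_left _ hz) p hp).le,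
    List.find?_map]
  congr 1
  refine List.find?_congr fun q hq => ?_
  simp [hB.strictMonoOn.lt_iff_lt hp (hbig q hq)]

theorem step_some (hB : BigPositions n u B s) (d : ℕ → Bool) {c : ℤ} {Q : List ℤ} {t : ℕ}
    {big : List ℤ} {p : ℤ} {pat : List (Option ℤ)} (hA : Valid n B s ⟨c, Q, t, big, some p :: pat⟩)
    (hres : ResNodup n (realize n u s ⟨c, Q, t, big, some p :: pat⟩)) :
    signStep n (realize n u s ⟨c, Q, t, big, some p :: pat⟩) =
        realize n u s (step n d ⟨c, Q, t, big, some p :: pat⟩) ∧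
      Valid n B s (step n d ⟨c, Q, t, big, some p :: pat⟩) := by
  have hp : p ∈ B := hA.pat_mem p (by simp)
  have hbig : ∀ r ∈ big, r ∈ B := hA.big_mem
  have hpat : ∀ q, some q ∈ pat → q ∈ B := fun q hq => hA.pat_mem q (by simp [hq])
  have hcount : pat.count none = (signRun n s t).2.2.2.length := by simpa using hA.count_none
  have hfind := find?_small_append_big hB (t := t) hp hbig
  change ResNodup n (c, _, Q, u p :: _) at hres
  change signStep n (c, _, Q, u p :: _) = _ ∧ _
  cases hq : big.find? (fun q => decide (p < q)) with
  | none =>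
    rw [hq] at hfind
    simp only [step, hq]
    refine ⟨?_, ⟨by simpa [or_imp, forall_and] using ⟨hbig, hp⟩, hpat, hcount⟩⟩
    rw [signStep_push (List.forall_lt_of_find?_eq_none hfind hres.head_not_mem)]
    simp [realize]
  | some q =>
    rw [hq] at hfind
    have hqB : q ∈ B := hbig q (List.mem_of_find?_eq_some hq)
    simp only [step, hq]
    refine ⟨?_, ⟨?_, by simpa [or_imp, forall_and] using ⟨hpat, hB.add_mem q hqB⟩,
      by simpa using hcount⟩⟩
    · rw [signStep_bump hfind]
      simp only [realize, List.map_append, Prod.mk.injEq, true_and]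
      refine ⟨?_, ?_⟩
      · rw [List.map_replace_eq_of_not_mem fun h =>
          (hB.lt t _ (List.mem_append_left _ h) q hqB).false,
          List.map_replace_map_of_injOn hB.strictMonoOn.injOn hbig hqB]
      · rw [fillHoles_append_some u _ pat _ hcount, hB.map_add q hqB, add_comm]
    · simp only [List.mem_map]
      rintro _ ⟨r, hr, rfl⟩
      split_ifs
      exacts [hp, hbig r hr]

section SmallLetter

variable {c : ℤ} {Q : List ℤ} {t : ℕ} {big : List ℤ} {pat : List (Option ℤ)} {a : ℤ}
  {sw : List ℤ}

theorem step_none_of_find?_eq_none (hB : BigPositions n u B s)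
    (hsw : (signRun n s t).2.2.2 = a :: sw) (hcount : pat.count none = sw.length)
    (hpat : ∀ q, some q ∈ pat → q ∈ B) (hbig : ∀ r ∈ big, r ∈ B)
    (hres : ResNodup n (c, (signRun n s t).2.1 ++ big.map u, Q, a :: fillHoles u pat sw))
    (hf : (signRun n s t).2.1.find? (fun x => decide (a < x)) = none) :
    let d := fun t => pushes (signRun n s t)
    signStep n (c, (signRun n s t).2.1 ++ big.map u, Q, a :: fillHoles u pat sw) =
        realize n u s (step n d ⟨c, Q, t, big, none :: pat⟩) ∧
      Valid n B s (step n d ⟨c, Q, t, big, none :: pat⟩) := by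
  intro d
  have hall := List.forall_lt_of_find?_eq_none hf
    fun h => hres.head_not_mem (List.mem_append_left _ h)
  have hd : d t = true := by simpa [d, pushes, hsw] using hall
  have hnext : (signRun n s (t + 1)).2.1 = (signRun n s t).2.1 ++ [a] ∧
      (signRun n s (t + 1)).2.2.2 = sw := by
    rw [signRun_succ, show signRun n s t = (_, _, _, a :: sw) from Prod.ext rfl (Prod.ext rfl
      (Prod.ext rfl hsw)), signStep_push hall]
    exact ⟨rfl, rfl⟩
  cases big with
  | nil =>
    simp only [step, hd, if_true]
    refine ⟨?_, ⟨by simp, hpat, by simpa [hnext.2] using hcount⟩⟩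
    rw [signStep_push (by simpa using hall)]
    simp [realize, hnext]
  | cons q big =>
    have hqB : q ∈ B := hbig q (by simp)
    have haq : a < u q := hB.lt t a (by simp [hsw]) q hqB
    have hfind : ((signRun n s t).2.1 ++ (q :: big).map u).find? (fun x => decide (a < x)) =
        some (u q) := by
      rw [List.find?_append_of_forall_le fun z hz => (hall z hz).le]
      simp [haq]
    have hq : u q ∉ big.map u := by
      have := hres.nodup
      simp only [List.map_cons] at this
      exact (List.nodup_cons.1 (List.nodup_append.1 this).2.1).1
    simp only [step, hd, if_true]
    refine ⟨?_, ⟨fun r hr => hbig r (by simp [hr]),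
      by simpa [or_imp, forall_and] using ⟨hpat, hB.add_mem q hqB⟩,
      by simpa [hnext.2] using hcount⟩⟩
    rw [signStep_bump hfind]
    simp only [realize, hnext, List.map_append, List.map_cons, if_pos, Prod.mk.injEq, true_and]
    refine ⟨?_, ?_⟩
    · rw [List.map_replace_eq_of_not_mem fun h => lt_asymm (hall _ h) haq,
        List.map_replace_eq_of_not_mem hq]
      simp
    · rw [fillHoles_append_some u _ pat _ hcount, hB.map_add q hqB, add_comm]

theorem step_none_of_find?_eq_some (hB : BigPositions n u B s)
    (hsw : (signRun n s t).2.2.2 = a :: sw) (hcount : pat.count none = sw.length)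
    (hpat : ∀ q, some q ∈ pat → q ∈ B) (hbig : ∀ r ∈ big, r ∈ B) {b : ℤ}
    (hf : (signRun n s t).2.1.find? (fun x => decide (a < x)) = some b) :
    let d := fun t => pushes (signRun n s t)
    signStep n (c, (signRun n s t).2.1 ++ big.map u, Q, a :: fillHoles u pat sw) =
        realize n u s (step n d ⟨c, Q, t, big, none :: pat⟩) ∧
      Valid n B s (step n d ⟨c, Q, t, big, none :: pat⟩) := by
  intro d
  have hb : b ∈ (signRun n s t).2.1 := List.mem_of_find?_eq_some hf
  have hab : a < b := by simpa using List.find?_some hf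
  have hd : d t = false := by simpa [d, pushes, hsw] using ⟨b, hb, hab.le⟩
  have hnext : (signRun n s (t + 1)).2.1 =
        (signRun n s t).2.1.map (fun x => if x = b then a else x) ∧
      (signRun n s (t + 1)).2.2.2 = sw ++ [(n : ℤ) + b] := by
    rw [signRun_succ, show signRun n s t = (_, _, _, a :: sw) from Prod.ext rfl (Prod.ext rfl
      (Prod.ext rfl hsw)), signStep_bump hf]
    exact ⟨rfl, rfl⟩
  have hfind : ((signRun n s t).2.1 ++ big.map u).find? (fun x => decide (a < x)) = some b := by
    rw [List.find?_append, hf]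
    rfl
  simp only [step, hd, Bool.false_eq_true, if_false]
  refine ⟨?_, ⟨hbig, by simpa [or_imp, forall_and] using hpat, by simpa [hnext.2] using hcount⟩⟩
  rw [signStep_bump hfind]
  simp only [realize, hnext, List.map_append, Prod.mk.injEq, true_and]
  refine ⟨?_, (fillHoles_append_none u _ pat _ hcount).symm⟩
  rw [List.map_replace_eq_of_not_mem (l := big.map u)]
  simp only [List.mem_map, not_exists, not_and]
  exact fun r hr h => (hB.lt t b (List.mem_append_left _ hb) r (hbig r hr)).ne' h

end SmallLetter

theorem step_none (hB : BigPositions n u B s) {c : ℤ} {Q : List ℤ} {t : ℕ} {big : List ℤ}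
    {pat : List (Option ℤ)} (hA : Valid n B s ⟨c, Q, t, big, none :: pat⟩)
    (hres : ResNodup n (realize n u s ⟨c, Q, t, big, none :: pat⟩)) :
    let d := fun t => pushes (signRun n s t)
    signStep n (realize n u s ⟨c, Q, t, big, none :: pat⟩) =
        realize n u s (step n d ⟨c, Q, t, big, none :: pat⟩) ∧
      Valid n B s (step n d ⟨c, Q, t, big, none :: pat⟩) := by
  obtain ⟨a, sw, hsw⟩ : ∃ a sw, (signRun n s t).2.2.2 = a :: sw := by
    have := hA.count_none
    cases h : (signRun n s t).2.2.2 with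
    | nil => simp [h] at this
    | cons a sw => exact ⟨a, sw, rfl⟩
  have hcount : pat.count none = sw.length := by simpa [hsw] using hA.count_none
  have hpat : ∀ q, some q ∈ pat → q ∈ B := fun q hq => hA.pat_mem q (by simp [hq])
  have hrealize : realize n u s ⟨c, Q, t, big, none :: pat⟩ =
      (c, (signRun n s t).2.1 ++ big.map u, Q, a :: fillHoles u pat sw) := by
    simp [realize, hsw, fillHoles]
  rw [hrealize] at hres ⊢
  cases hf : (signRun n s t).2.1.find? (fun x => decide (a < x)) with
  | none => exact step_none_of_find?_eq_none hB hsw hcount hpat hA.big_mem hres hf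
  | some b => exact step_none_of_find?_eq_some hB hsw hcount hpat hA.big_mem hf

theorem signStep_realize (hB : BigPositions n u B s) {A : Skeleton} (hA : Valid n B s A)
    (hres : ResNodup n (realize n u s A)) :
    signStep n (realize n u s A) = realize n u s (step n (fun t => pushes (signRun n s t)) A) ∧
      Valid n B s (step n (fun t => pushes (signRun n s t)) A) := by
  obtain ⟨c, Q, t, big, _ | ⟨_ | p, pat⟩⟩ := A
  · exact ⟨signStep_of_word_eq_nil rfl, hA⟩
  · exact step_none hB hA hres
  · exact step_some hB _ hA hres

def run (n : ℕ) (d : ℕ → Bool) (pat : List (Option ℤ)) (T : ℕ) : Skeleton :=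
  (step n d)^[T] ⟨0, [], 0, [], pat⟩

theorem signRun_fillHoles (hB : BigPositions n u B s) {pat : List (Option ℤ)}
    (hpat : ∀ p, some p ∈ pat → p ∈ B) (hcount : pat.count none = s.length)
    (hres : ResNodup n (0, [], [], fillHoles u pat s)) (T : ℕ) :
    let A := run n (fun t => pushes (signRun n s t)) pat T
    signRun n (fillHoles u pat s) T = realize n u s A ∧ Valid n B s A := by
  induction T with
  | zero => exact ⟨by simp [realize, run, signRun], ⟨by simp [run], hpat, hcount⟩⟩
  | succ T ih =>
    rw [signRun_succ, run, Function.iterate_succ_apply', ← run, ih.1]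
    exact signStep_realize hB ih.2 (ih.1 ▸ hres.signRun T)

theorem Valid.signRun_eq_nil {A : Skeleton} (hA : Valid n B s A)
    (h : (realize n u s A).2.2.2 = []) : (signRun n s A.t).2.2.2 = [] :=
  eq_nil_of_fillHoles_eq_nil u hA.count_none h

end Skeleton

section AffinePermutation

variable {n : ℕ}

theorem map_add_mul_of_map_add {u : ℤ → ℤ} (hper : ∀ i : ℤ, u (i + n) = u i + n) (i k : ℤ) :
    u (i + k * n) = u i + k * n := by
  simpa using AddConstMapClass.map_add_zsmul (⟨u, hper⟩ : AddConstMap ℤ ℤ (n : ℤ) (n : ℤ)) i k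

def upperShifts (n : ℕ) (X : Finset ℤ) : Set ℤ := {p | ∃ x ∈ X, ∃ k : ℕ, p = x + k * n}

noncomputable def windowPattern (n : ℕ) (X : Finset ℤ) : List (Option ℤ) :=
  ((Finset.Icc (1 : ℤ) n).sort (· ≤ ·)).map fun y => if y ∈ X then some y else none

theorem fillHoles_map_ite (u : ℤ → ℤ) (X : Finset ℤ) :
    ∀ L : List ℤ, fillHoles u (L.map fun y => if y ∈ X then some y else none)
      ((L.filter fun y => y ∉ X).map u) = L.map u
  | [] => rfl
  | y :: L => by
    by_cases hy : y ∈ X <;> simpa [hy, fillHoles] using fillHoles_map_ite u X L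

theorem count_none_map_ite (X : Finset ℤ) (L : List ℤ) :
    (L.map fun y => if y ∈ X then some y else none).count none =
      (L.filter fun y => y ∉ X).length := by
  induction L with
  | nil => rfl
  | cons y L ih => by_cases hy : y ∈ X <;> simp [hy, ih]

theorem windowWord_Icc (u : ℤ → ℤ) :
    windowWord n (Finset.Icc 1 n) u = ((Finset.Icc (1 : ℤ) n).sort (· ≤ ·)).map u := by
  rw [windowWord, List.filter_eq_self.2 fun y hy => by simpa using hy]

theorem windowWord_Icc_sdiff (X : Finset ℤ) (u : ℤ → ℤ) :
    windowWord n (Finset.Icc 1 n \ X) u =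
      (((Finset.Icc (1 : ℤ) n).sort (· ≤ ·)).filter fun y => y ∉ X).map u := by
  rw [windowWord]
  congr 1
  exact List.filter_congr fun y hy => by simp_all

theorem fillHoles_windowPattern (X : Finset ℤ) (u : ℤ → ℤ) :
    fillHoles u (windowPattern n X) (windowWord n (Finset.Icc 1 n \ X) u) =
      windowWord n (Finset.Icc 1 n) u := by
  rw [windowWord_Icc_sdiff, windowWord_Icc, windowPattern, fillHoles_map_ite]

theorem count_none_windowPattern (X : Finset ℤ) (u : ℤ → ℤ) :
    (windowPattern n X).count none = (windowWord n (Finset.Icc 1 n \ X) u).length := by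
  rw [windowWord_Icc_sdiff, windowPattern, count_none_map_ite, List.length_map]

theorem length_windowWord_le (Y : Finset ℤ) (u : ℤ → ℤ) : (windowWord n Y u).length ≤ n := by
  rw [windowWord, List.length_map]
  refine List.length_filter_le _ _ |>.trans ?_
  simp

theorem resNodup_windowWord {u : ℤ → ℤ} (hu : Function.Injective u)
    (hper : ∀ i : ℤ, u (i + n) = u i + n) :
    ResNodup n (0, [], [], windowWord n (Finset.Icc 1 n) u) := by
  rw [ResNodup, windowWord_Icc, List.nil_append, List.map_map]
  refine List.Nodup.map_on (fun x hx y hy hxy => ?_) (Finset.sort_nodup _ _)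
  simp only [Finset.mem_sort, Finset.mem_Icc] at hx hy
  obtain ⟨k, hk⟩ := (ZMod.intCast_eq_intCast_iff_dvd_sub _ _ _).1 hxy
  have hyx : y = x + k * n := hu (by
    rw [map_add_mul_of_map_add hper]; linarith)
  have : y - x = 0 :=
    Int.eq_zero_of_abs_lt_dvd (m := n) ⟨k, by rw [hyx]; ring⟩ (abs_lt.2 ⟨by omega, by omega⟩)
  omega

theorem bigPositions_upperShifts {u : ℤ → ℤ} {X : Finset ℤ}
    (hper : ∀ i : ℤ, u (i + n) = u i + n) (hstream : IsStream n (restrictedGraph n u X))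
    (hsep : ∀ x ∈ X, ∀ y ∈ Finset.Icc (1 : ℤ) n, y ∉ X → u y + (n : ℤ) ^ 2 < u x) :
    BigPositions n u (upperShifts n X) (windowWord n (Finset.Icc 1 n \ X) u) where
  add_mem := by
    rintro _ ⟨x, hx, k, rfl⟩
    exact ⟨x, hx, k + 1, by push_cast; ring⟩
  map_add p _ := hper p
  strictMonoOn := by
    rintro _ ⟨x, hx, k, rfl⟩ _ ⟨y, hy, l, rfl⟩ hlt
    exact hstream.2.1 (_, u _) (_, u _) ⟨rfl, x, hx, k, rfl⟩ ⟨rfl, y, hy, l, rfl⟩ hlt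
  lt := by
    rintro t z hz _ ⟨x, hx, k, rfl⟩
    have hM : ∀ z ∈ windowWord n (Finset.Icc 1 n \ X) u, z ≤ u x - n ^ 2 - 1 := by
      simp only [windowWord, List.mem_map, List.mem_filter, Finset.mem_sort,
        decide_eq_true_eq, Finset.mem_sdiff]
      rintro _ ⟨y, ⟨-, hy, hyX⟩, rfl⟩
      linarith [hsep x hx y hy hyX]
    have hz := signRun_le hM t z hz
    have hlen : ((windowWord n (Finset.Icc 1 n \ X) u).length : ℤ) * n ≤ n ^ 2 := by
      rw [sq]; gcongr; exact_mod_cast length_windowWord_le _ u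
    rw [map_add_mul_of_map_add hper]
    nlinarith [(by positivity : (0 : ℤ) ≤ k * n)]

theorem signRun_windowWord {u : ℤ → ℤ} {X : Finset ℤ} (hu : Function.Injective u)
    (hper : ∀ i : ℤ, u (i + n) = u i + n) (hstream : IsStream n (restrictedGraph n u X))
    (hsep : ∀ x ∈ X, ∀ y ∈ Finset.Icc (1 : ℤ) n, y ∉ X → u y + (n : ℤ) ^ 2 < u x) (T : ℕ) :
    let s := windowWord n (Finset.Icc 1 n \ X) u
    let A := Skeleton.run n (fun t => pushes (signRun n s t)) (windowPattern n X) T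
    signRun n (windowWord n (Finset.Icc 1 n) u) T = Skeleton.realize n u s A ∧
      Skeleton.Valid n (upperShifts n X) s A := by
  have hpat : ∀ p, some p ∈ windowPattern n X → p ∈ upperShifts n X := by
    intro p hp
    simp only [windowPattern, List.mem_map, Option.ite_none_right_eq_some, Option.some.injEq] at hp
    obtain ⟨y, -, hy, rfl⟩ := hp
    exact ⟨y, hy, 0, by simp⟩
  have hres := resNodup_windowWord hu hper
  rw [← fillHoles_windowPattern X] at hres ⊢
  exact Skeleton.signRun_fillHoles (bigPositions_upperShifts hper hstream hsep) hpat
    (count_none_windowPattern X u) hres T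

end AffinePermutation

theorem stmt18_general (n : ℕ) (v w : Equiv.Perm ℤ)
    (hvper : ∀ i : ℤ, v (i + n) = v i + n)
    (hwper : ∀ i : ℤ, w (i + n) = w i + n)
    (X : Finset ℤ)
    (hchanv : IsChannel n {p : ℤ × ℤ | v p.1 = p.2} (restrictedGraph n v X))
    (hchanw : IsChannel n {p : ℤ × ℤ | w p.1 = p.2} (restrictedGraph n w X))
    (hsepv : ∀ x ∈ X, ∀ y ∈ Finset.Icc (1 : ℤ) (n : ℤ), y ∉ X →
      v y + (n : ℤ) ^ 2 < v x)
    (hsepw : ∀ x ∈ X, ∀ y ∈ Finset.Icc (1 : ℤ) (n : ℤ), y ∉ X →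
      w y + (n : ℤ) ^ 2 < w x)
    (hrest : SgnQEq n (windowWord n ((Finset.Icc (1 : ℤ) (n : ℤ)) \ X) v)
      (windowWord n ((Finset.Icc (1 : ℤ) (n : ℤ)) \ X) w)) :
    SgnQEq n (windowWord n (Finset.Icc (1 : ℤ) (n : ℤ)) v)
      (windowWord n (Finset.Icc (1 : ℤ) (n : ℤ)) w) := by
  intro N M hN hM
  change (signRun n _ N).2.2.2 = [] at hN
  change (signRun n _ M).2.2.2 = [] at hM
  change (signRun n _ N).2.2.1 = (signRun n _ M).2.2.1
  have hv := signRun_windowWord v.injective hvper hchanv.1 hsepv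
  have hw := signRun_windowWord w.injective hwper hchanw.1 hsepw
  have hpushes := hrest.pushes_eq ((hv N).2.signRun_eq_nil ((hv N).1 ▸ hN))
    ((hw M).2.signRun_eq_nil ((hw M).1 ▸ hM))
  rw [← signRun_eq_of_le hN (le_max_left N M), ← signRun_eq_of_le hM (le_max_right N M),
    (hv _).1, (hw _).1]
  exact congrArg (fun d => (Skeleton.run n d _ _).Q) (funext hpushes)

/-- If `v, w` are extended affine permutations whose restrictions to `X + nℤ`
are channels with values much larger than the remaining window values, the
relative orders of `{v (i n + x)}` and `{w (i n + x)}` (`i ∈ [0, n−1]`,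
`x ∈ X`) coincide, and `sgn_𝔔` of the restrictions to `[1,n] − X` agree, then
`sgn_𝔔 v = sgn_𝔔 w`. -/
theorem stmt18 (n : ℕ) (hn : 0 < n) (v w : Equiv.Perm ℤ)
    (hvper : ∀ i : ℤ, v (i + n) = v i + n)
    (hwper : ∀ i : ℤ, w (i + n) = w i + n)
    (X : Finset ℤ) (hX : X ⊆ Finset.Icc (1 : ℤ) (n : ℤ))
    (hchanv : IsChannel n {p : ℤ × ℤ | v p.1 = p.2} (restrictedGraph n v X))
    (hchanw : IsChannel n {p : ℤ × ℤ | w p.1 = p.2} (restrictedGraph n w X))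
    (hsepv : ∀ x ∈ X, ∀ y ∈ Finset.Icc (1 : ℤ) (n : ℤ), y ∉ X →
      v y + (n : ℤ) ^ 2 < v x)
    (hsepw : ∀ x ∈ X, ∀ y ∈ Finset.Icc (1 : ℤ) (n : ℤ), y ∉ X →
      w y + (n : ℤ) ^ 2 < w x)
    (horder : ∀ i i' : ℤ, 0 ≤ i → i ≤ (n : ℤ) - 1 → 0 ≤ i' → i' ≤ (n : ℤ) - 1 →
      ∀ x ∈ X, ∀ x' ∈ X,
        (v (i * n + x) ≤ v (i' * n + x') ↔ w (i * n + x) ≤ w (i' * n + x')))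
    (hrest : SgnQEq n (windowWord n ((Finset.Icc (1 : ℤ) (n : ℤ)) \ X) v)
      (windowWord n ((Finset.Icc (1 : ℤ) (n : ℤ)) \ X) w)) :
    SgnQEq n (windowWord n (Finset.Icc (1 : ℤ) (n : ℤ)) v)
      (windowWord n (Finset.Icc (1 : ℤ) (n : ℤ)) w) :=
  stmt18_general n v w hvper hwper X hchanv hchanw hsepv hsepw hrest
end
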